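/- arXiv:1510.00269 — 5 statements merged into one kernel-verified Lean document; each statement's English description precedes it below -/
import Mathlib

section
/- The number of permutations of length n avoiding the pattern 312 equals the n-th Catalan number C(n) = (1/(n+1))·binomial(2n,n). -/
/-!
If `π` avoids 312 and takes the value `0` at position `p`, then every entry left of `p` is
smaller than every entry right of `p`: otherwise these two entries and the `0` form a 312.
So the left block consists of the values `1, …, p` and the right block of `p + 1, …, n`,
i.e. `π` is the direct sum `σ ⊕ τ` of two 312-avoiding permutations of lengths `p` and
`n - p`, with a new minimum inserted at position `p`; conversely every such permutation
avoids 312. This gives the Catalan recurrence `C (n + 1) = ∑ p, C p * C (n - p)`.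
-/

open Equiv Finset

/-- `π` avoids the pattern 312. -/
def Avoids312 {n : ℕ} (π : Equiv.Perm (Fin n)) : Prop :=
  ∀ i j k : Fin n, i < j → j < k → ¬ (π j < π k ∧ π k < π i)

variable {m n p q : ℕ}

theorem Avoids312.of_comp {π : Perm (Fin m)} {ρ : Perm (Fin n)} {e g : Fin n → Fin m}
    (he : StrictMono e) (hg : StrictMono g) (h : ∀ i, π (e i) = g (ρ i)) (hπ : Avoids312 π) :
    Avoids312 ρ := fun i j k hij hjk hpattern =>
  hπ (e i) (e j) (e k) (he hij) (he hjk) (by simpa only [h, hg.lt_iff_lt] using hpattern)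

namespace Equiv.Perm

def SplitsAt (ρ : Perm (Fin n)) (m : ℕ) : Prop :=
  ∀ i j : Fin n, (i : ℕ) < m → m ≤ (j : ℕ) → ρ i < ρ j

theorem SplitsAt.val_apply_lt_iff {ρ : Perm (Fin n)} (h : ρ.SplitsAt m) (i : Fin n) :
    (ρ i : ℕ) < m ↔ (i : ℕ) < m := by
  -- The values taken at positions `< m` form a down-closed set of size `m`, so they are `< m`.
  have hdown : ∀ v w : Fin n, w ≤ v → (ρ.symm v : ℕ) < m → (ρ.symm w : ℕ) < m := by
    intro v w hwv hv
    by_contra! hw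
    exact (by simpa using h _ _ hv hw : v < w).not_ge hwv
  have hcard : #{v : Fin n | (ρ.symm v : ℕ) < m} = min n m := by
    rw [← Fin.card_filter_val_lt]
    exact card_equiv ρ.symm (by simp)
  simpa [hcard] using Fin.lt_card_filter_univ_iff_apply_of_imp (j := ρ i) _ hdown

def directSum (σ : Perm (Fin p)) (τ : Perm (Fin q)) : Perm (Fin (p + q)) :=
  finSumFinEquiv.permCongr (σ.sumCongr τ)

@[simp]
theorem directSum_castAdd (σ : Perm (Fin p)) (τ : Perm (Fin q)) (i : Fin p) :
    directSum σ τ (Fin.castAdd q i) = Fin.castAdd q (σ i) := by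
  simp [directSum]

@[simp]
theorem directSum_natAdd (σ : Perm (Fin p)) (τ : Perm (Fin q)) (j : Fin q) :
    directSum σ τ (Fin.natAdd p j) = Fin.natAdd p (τ j) := by
  simp [directSum]

theorem directSum_injective2 : Function.Injective2 (directSum (p := p) (q := q)) := by
  intro σ σ' τ τ' h
  refine ⟨ext fun i => ?_, ext fun j => ?_⟩
  · simpa using Equiv.congr_fun h (Fin.castAdd q i)
  · simpa using Equiv.congr_fun h (Fin.natAdd p j)

theorem splitsAt_directSum (σ : Perm (Fin p)) (τ : Perm (Fin q)) :
    (directSum σ τ).SplitsAt p := by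
  intro i j hi hj
  induction i using Fin.addCases <;> induction j using Fin.addCases <;>
    simp_all only [directSum_castAdd, directSum_natAdd, Fin.lt_def, Fin.val_castAdd,
      Fin.val_natAdd] <;> omega

theorem avoids312_directSum_iff {σ : Perm (Fin p)} {τ : Perm (Fin q)} :
    Avoids312 (directSum σ τ) ↔ Avoids312 σ ∧ Avoids312 τ := by
  refine ⟨fun h => ⟨h.of_comp (Fin.strictMono_castAdd q) (Fin.strictMono_castAdd q) (by simp),
    h.of_comp (Fin.strictMono_natAdd p) (Fin.strictMono_natAdd p) (by simp)⟩, ?_⟩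
  rintro ⟨hσ, hτ⟩ i j k hij hjk ⟨hjk', hki'⟩
  induction i using Fin.addCases <;> induction j using Fin.addCases <;>
    induction k using Fin.addCases <;>
    simp only [directSum_castAdd, directSum_natAdd, Fin.lt_def, Fin.val_castAdd,
      Fin.val_natAdd] at hij hjk hjk' hki'
  case left.left.left i j k => exact hσ i j k hij hjk ⟨hjk', hki'⟩
  case right.right.right i j k =>
    exact hτ i j k (Fin.lt_def.2 (by omega)) (Fin.lt_def.2 (by omega))
      ⟨Fin.lt_def.2 (by omega), Fin.lt_def.2 (by omega)⟩
  all_goals omega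

theorem SplitsAt.exists_directSum_eq {ρ : Perm (Fin (p + q))} (h : ρ.SplitsAt p) :
    ∃ σ τ, directSum σ τ = ρ := by
  have hL (i : Fin p) : (ρ (Fin.castAdd q i) : ℕ) < p := (h.val_apply_lt_iff _).2 (by simp)
  have hR (j : Fin q) : p ≤ (ρ (Fin.natAdd p j) : ℕ) :=
    not_lt.1 fun hj => by simpa using (h.val_apply_lt_iff _).1 hj
  let σ (i : Fin p) : Fin p := ⟨ρ (Fin.castAdd q i), hL i⟩
  let τ (j : Fin q) : Fin q := ⟨ρ (Fin.natAdd p j) - p, by have := hR j; omega⟩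
  have hσ : σ.Injective := fun i i' hii' => by
    simp only [σ, Fin.mk.injEq, Fin.val_inj, EmbeddingLike.apply_eq_iff_eq] at hii'
    exact Fin.castAdd_injective p q hii'
  have hτ : τ.Injective := fun j j' hjj' => by
    have := hR j; have := hR j'
    simp only [τ, Fin.mk.injEq] at hjj'
    exact Fin.natAdd_injective q p (ρ.injective
      (show ρ (Fin.natAdd p j) = ρ (Fin.natAdd p j') from Fin.ext (by omega)))
  refine ⟨ofBijective σ hσ.bijective_of_finite, ofBijective τ hτ.bijective_of_finite, ?_⟩
  ext x
  induction x using Fin.addCases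
  · simp [σ]
  · have := hR ‹_›
    simp [τ]
    omega

def insertMin (k : Fin (n + 1)) (ρ : Perm (Fin n)) : Perm (Fin (n + 1)) :=
  (finSuccEquiv' k).trans (ρ.optionCongr.trans (finSuccEquiv n).symm)

@[simp]
theorem insertMin_apply_self (k : Fin (n + 1)) (ρ : Perm (Fin n)) : insertMin k ρ k = 0 := by
  simp [insertMin]

@[simp]
theorem insertMin_apply_succAbove (k : Fin (n + 1)) (ρ : Perm (Fin n)) (i : Fin n) :
    insertMin k ρ (k.succAbove i) = (ρ i).succ := by
  simp [insertMin]

theorem insertMin_injective (k : Fin (n + 1)) : Function.Injective (insertMin k) :=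
  fun ρ ρ' h => ext fun i => by simpa using Equiv.congr_fun h (k.succAbove i)

theorem exists_insertMin_eq (π : Perm (Fin (n + 1))) : ∃ ρ, insertMin (π.symm 0) ρ = π := by
  let e : Perm (Option (Fin n)) :=
    ((finSuccEquiv' (π.symm 0)).symm.trans π).trans (finSuccEquiv n)
  have he : (removeNone e).optionCongr = e := by
    rw [map_equiv_removeNone, show e none = none by simp [e], swap_self]; rfl
  refine ⟨removeNone e, ext fun x => ?_⟩
  simp [insertMin, he, e]

theorem avoids312_insertMin_iff {k : Fin (n + 1)} {ρ : Perm (Fin n)} :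
    Avoids312 (insertMin k ρ) ↔ Avoids312 ρ ∧ ρ.SplitsAt k := by
  have below {i : Fin n} : k.succAbove i < k ↔ (i : ℕ) < k := by
    rw [Fin.succAbove_lt_iff_castSucc_lt, Fin.lt_def, Fin.val_castSucc]
  have above {j : Fin n} : k < k.succAbove j ↔ (k : ℕ) ≤ j := by
    rw [Fin.lt_succAbove_iff_le_castSucc, Fin.le_def, Fin.val_castSucc]
  constructor
  · intro h
    refine ⟨h.of_comp k.strictMono_succAbove Fin.strictMono_succ (insertMin_apply_succAbove k ρ),
      fun i j hi hj => ?_⟩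
    have hij : i ≠ j := by rintro rfl; omega
    refine (lt_or_gt_of_ne (ρ.injective.ne hij)).resolve_right fun hji =>
      h _ k _ (below.2 hi) (above.2 hj) ?_
    simp only [insertMin_apply_self, insertMin_apply_succAbove, Fin.succ_lt_succ_iff]
    exact ⟨Fin.succ_pos _, hji⟩
  · rintro ⟨hρ, hsplit⟩ a b c hab hbc ⟨hbc', hca'⟩
    obtain ⟨i, rfl⟩ := Fin.exists_succAbove_eq (x := a) (y := k) (by rintro rfl; simp at hca')
    obtain ⟨l, rfl⟩ := Fin.exists_succAbove_eq (x := c) (y := k) (by rintro rfl; simp at hbc')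
    rcases eq_or_ne b k with rfl | hb
    · exact (hsplit i l (below.1 hab) (above.1 hbc)).not_gt (by simpa using hca')
    · obtain ⟨j, rfl⟩ := Fin.exists_succAbove_eq hb
      simp only [insertMin_apply_succAbove, Fin.succ_lt_succ_iff, Fin.succAbove_lt_succAbove_iff]
        at hab hbc hbc' hca'
      exact hρ i j l hab hbc ⟨hbc', hca'⟩

end Equiv.Perm

open Equiv.Perm

theorem card_avoids312_fiber (p q : ℕ) :
    Nat.card {π : Perm (Fin (p + q + 1)) // Avoids312 π ∧ π.symm 0 = ⟨p, by omega⟩} =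
      Nat.card {σ : Perm (Fin p) // Avoids312 σ} *
        Nat.card {τ : Perm (Fin q) // Avoids312 τ} := by
  let k : Fin (p + q + 1) := ⟨p, by omega⟩
  let glue (x : {σ : Perm (Fin p) // Avoids312 σ} × {τ : Perm (Fin q) // Avoids312 τ}) :
      {π : Perm (Fin (p + q + 1)) // Avoids312 π ∧ π.symm 0 = k} :=
    ⟨insertMin k (directSum x.1 x.2),
      avoids312_insertMin_iff.2
        ⟨avoids312_directSum_iff.2 ⟨x.1.2, x.2.2⟩, splitsAt_directSum _ _⟩,
      by simp [symm_apply_eq]⟩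
  have hglue : glue.Bijective := by
    refine ⟨fun x y hxy => ?_, fun ⟨π, hπ, hk⟩ => ?_⟩
    · obtain ⟨hσ, hτ⟩ :=
        directSum_injective2 (insertMin_injective k (congr_arg Subtype.val hxy))
      exact Prod.ext (Subtype.ext hσ) (Subtype.ext hτ)
    · obtain ⟨ρ, hρ⟩ := exists_insertMin_eq π
      rw [hk] at hρ
      subst hρ
      obtain ⟨hρ, hsplit⟩ := avoids312_insertMin_iff.1 hπ
      obtain ⟨σ, τ, rfl⟩ := hsplit.exists_directSum_eq
      obtain ⟨hσ, hτ⟩ := avoids312_directSum_iff.1 hρ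
      exact ⟨(⟨σ, hσ⟩, ⟨τ, hτ⟩), rfl⟩
  rw [← Nat.card_prod]
  exact (Nat.card_congr (ofBijective glue hglue)).symm

theorem card_avoids312_succ (n : ℕ) :
    Nat.card {π : Perm (Fin (n + 1)) // Avoids312 π} =
      ∑ k : Fin (n + 1), Nat.card {σ : Perm (Fin k) // Avoids312 σ} *
        Nat.card {τ : Perm (Fin (n - k)) // Avoids312 τ} := by
  rw [← Nat.card_congr (sigmaFiberEquiv fun π : {π // Avoids312 π} => π.1.symm 0),
    Nat.card_sigma]
  refine Finset.sum_congr rfl fun k _ => ?_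
  refine (Nat.card_congr
    (subtypeSubtypeEquivSubtypeInter Avoids312 fun π => π.symm 0 = k)).trans ?_
  obtain ⟨k, hk⟩ := k
  obtain ⟨q, rfl⟩ := Nat.exists_eq_add_of_le (Nat.le_of_lt_succ hk)
  rw [Nat.add_sub_cancel_left]
  exact card_avoids312_fiber k q

/-- The number of permutations of length `n` avoiding 312 is the `n`-th Catalan number. -/
theorem stmt1 (n : ℕ) :
    Nat.card {π : Equiv.Perm (Fin n) // Avoids312 π} = catalan n := by
  induction n using Nat.strong_induction_on with
  | _ n ih =>
    cases n with
    | zero =>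
      rw [catalan_zero, Nat.card_eq_one_iff_unique]
      exact ⟨inferInstance, ⟨⟨1, fun i => i.elim0⟩⟩⟩
    | succ n =>
      rw [card_avoids312_succ, catalan_succ]
      refine Finset.sum_congr rfl fun k _ => ?_
      rw [ih k (by omega), ih (n - k) (by omega)]
end

section
/- The number of permutations of length n avoiding the pattern 321 equals the n-th Catalan number, and hence Av(312) and Av(321) are Wilf-equivalent: for every n, |Av_n(312)| = |Av_n(321)|. -/
/-- `π` avoids the pattern 321. -/
def Avoids321 {n : ℕ} (π : Equiv.Perm (Fin n)) : Prop :=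
  ∀ i j k : Fin n, i < j → j < k → ¬ (π k < π j ∧ π j < π i)

/-!
Both classes are counted by the Catalan numbers.

A 312-avoider of length `n + 1` splits at the position `p` of its smallest entry: every entry
before `p` is smaller than every entry after it, and both blocks are again 312-avoiders. The
monotone maps `m : Fin n → Fin n` with `i ≤ m i` (Dyck paths) split in the same way at their
first fixed point, so both families satisfy `C (n + 1) = ∑ p, C p * C (n - p)`.

A 321-avoider is determined by its running maximum, which is such a monotone map: the entries
that are not left-to-right maxima increase, so they are the unused values in increasing order.
Conversely, filling the non-record positions of any such map `m` increasingly with the values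
outside its range gives a 321-avoider with running maximum `m`; counting shows each filled value
stays below `m`.
-/

open Finset

variable {n : ℕ}

section Glue

def glue (p v : Fin (n + 1)) (a : Fin p → Fin p) (b : Fin (n - p) → Fin (n - p)) :
    Fin (n + 1) → Fin (n + 1) := fun i =>
  if h : (i : ℕ) < p then ⟨a ⟨i, h⟩ + 1, by omega⟩
  else if h' : (p : ℕ) < i then ⟨b ⟨i - (p + 1), by omega⟩ + (p + 1), by omega⟩
  else v

def IsSplitAt (p v : Fin (n + 1)) (f : Fin (n + 1) → Fin (n + 1)) : Prop :=
  f p = v ∧ (∀ i : Fin (n + 1), (i : ℕ) < p → 0 < (f i : ℕ) ∧ (f i : ℕ) ≤ p) ∧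
    ∀ i : Fin (n + 1), (p : ℕ) < i → (p : ℕ) < f i

-- Reducing mod `p` only makes `lower` total: when `f` is split at `p`, `f i - 1 < p` already.
def lower (p : Fin (n + 1)) (f : Fin (n + 1) → Fin (n + 1)) : Fin p → Fin p := fun i =>
  ⟨((f ⟨i, by omega⟩ : ℕ) - 1) % p, Nat.mod_lt _ i.pos⟩

def upper (p : Fin (n + 1)) (f : Fin (n + 1) → Fin (n + 1)) : Fin (n - p) → Fin (n - p) :=
  fun j => ⟨((f ⟨p + 1 + j, by omega⟩ : ℕ) - (p + 1)) % (n - p), Nat.mod_lt _ j.pos⟩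

variable {p v : Fin (n + 1)} {a : Fin p → Fin p} {b : Fin (n - p) → Fin (n - p)}
  {f : Fin (n + 1) → Fin (n + 1)}

lemma glue_val_of_lt {i : Fin (n + 1)} (h : (i : ℕ) < p) :
    (glue p v a b i : ℕ) = a ⟨i, h⟩ + 1 := by
  simp [glue, h]

lemma glue_self : glue p v a b p = v := by
  simp [glue]

lemma glue_val_of_gt {i : Fin (n + 1)} (h : (p : ℕ) < i) :
    (glue p v a b i : ℕ) = b ⟨i - (p + 1), by omega⟩ + (p + 1) := by
  simp [glue, h, h.not_gt]

lemma isSplitAt_glue : IsSplitAt p v (glue p v a b) :=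
  ⟨glue_self, fun i h => by rw [glue_val_of_lt h]; omega,
    fun i h => by rw [glue_val_of_gt h]; omega⟩

lemma IsSplitAt.apply_of_lt (hf : IsSplitAt p v f) {i : Fin (n + 1)} (hi : (i : ℕ) < p) :
    (f i : ℕ) = lower p f ⟨i, hi⟩ + 1 := by
  have := hf.2.1 i hi
  simp only [lower, Fin.eta]
  rw [Nat.mod_eq_of_lt (by omega)]
  omega

lemma IsSplitAt.apply_of_gt (hf : IsSplitAt p v f) {i : Fin (n + 1)} (hi : (p : ℕ) < i) :
    (f i : ℕ) = upper p f ⟨i - (p + 1), by omega⟩ + (p + 1) := by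
  have := hf.2.2 i hi
  simp only [upper]
  rw [Nat.mod_eq_of_lt (by omega)]
  have : (⟨p + 1 + (i - (p + 1)), by omega⟩ : Fin (n + 1)) = i := by ext; simp only; omega
  rw [this]
  omega

lemma IsSplitAt.lower_val (hf : IsSplitAt p v f) (i : Fin p) :
    (lower p f i : ℕ) + 1 = f ⟨i, by omega⟩ := by
  rw [hf.apply_of_lt i.isLt]

lemma IsSplitAt.upper_val (hf : IsSplitAt p v f) (j : Fin (n - p)) :
    (upper p f j : ℕ) + (p + 1) = f ⟨p + 1 + j, by omega⟩ := by
  rw [hf.apply_of_gt (by simp only; omega)]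
  simp only [Nat.add_sub_cancel_left]

lemma lower_glue : lower p (glue p v a b) = a := by
  ext i
  have := (isSplitAt_glue (v := v) (a := a) (b := b)).lower_val i
  rw [glue_val_of_lt i.isLt] at this
  simp only [Fin.eta] at this
  omega

lemma upper_glue : upper p (glue p v a b) = b := by
  ext j
  have := (isSplitAt_glue (v := v) (a := a) (b := b)).upper_val j
  rw [glue_val_of_gt (by simp only; omega)] at this
  simp only [Nat.add_sub_cancel_left, Fin.eta] at this
  omega

lemma IsSplitAt.glue_lower_upper (hf : IsSplitAt p v f) :
    glue p v (lower p f) (upper p f) = f := by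
  ext i
  rcases lt_trichotomy (i : ℕ) p with h | h | h
  · rw [glue_val_of_lt h, hf.apply_of_lt h]
  · rw [show i = p from Fin.ext h, glue_self, hf.1]
  · rw [glue_val_of_gt h, hf.apply_of_gt h]

open Classical in
lemma card_filter_isSplitAt (p v : Fin (n + 1)) (A : Finset (Fin p → Fin p))
    (B : Finset (Fin (n - p) → Fin (n - p))) :
    #{f | IsSplitAt p v f ∧ lower p f ∈ A ∧ upper p f ∈ B} = #A * #B := by
  rw [← card_product]
  refine card_nbij' (fun f => (lower p f, upper p f)) (fun ab => glue p v ab.1 ab.2)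
    ?_ ?_ ?_ ?_
  · intro f hf
    simp only [coe_filter, Set.mem_ofPred_eq, mem_univ, true_and] at hf
    simp [hf.2]
  · rintro ⟨a, b⟩ hab
    simp only [coe_product, Set.mem_prod, mem_coe] at hab
    simp [isSplitAt_glue, lower_glue, upper_glue, hab]
  · intro f hf
    simp only [coe_filter, Set.mem_ofPred_eq, mem_univ, true_and] at hf
    exact hf.1.glue_lower_upper
  · rintro ⟨a, b⟩ -
    simp [lower_glue, upper_glue]

end Glue

open Classical in
theorem card_eq_catalan_of_split (X : ∀ n, Finset (Fin n → Fin n))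
    (c : ∀ n, Fin (n + 1) → Fin (n + 1)) (h0 : #(X 0) = 1)
    (hX : ∀ n (f : Fin (n + 1) → Fin (n + 1)),
      f ∈ X (n + 1) ↔
        ∃ p, IsSplitAt p (c n p) f ∧ lower p f ∈ X p ∧ upper p f ∈ X (n - p))
    (hunique : ∀ n (f : Fin (n + 1) → Fin (n + 1)) (p q : Fin (n + 1)),
      IsSplitAt p (c n p) f → lower p f ∈ X p →
      IsSplitAt q (c n q) f → lower q f ∈ X q → p = q)
    (n : ℕ) : #(X n) = catalan n := by
  induction n using Nat.strong_induction_on with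
  | _ n ih =>
  match n with
  | 0 => rw [h0, catalan_zero]
  | n + 1 =>
    have hunion : X (n + 1) = univ.biUnion fun p : Fin (n + 1) =>
        {f | IsSplitAt p (c n p) f ∧ lower p f ∈ X p ∧ upper p f ∈ X (n - p)} := by
      ext f
      simp [hX]
    rw [hunion, card_biUnion, catalan_succ]
    · refine sum_congr rfl fun p _ => ?_
      rw [card_filter_isSplitAt, ih _ (by omega), ih _ (by omega)]
    · intro p _ q _ hpq
      refine disjoint_filter.2 fun f _ hp hq => hpq ?_
      exact hunique n f p q hp.1 hp.2.1 hq.1 hq.2.1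

section Dyck

-- Maps above the diagonal: `m i + 1` counts the up-steps of a Dyck path before its `i+1`-st
-- down-step.
open Classical in
def dyckMaps (n : ℕ) : Finset (Fin n → Fin n) := {f | Monotone f ∧ ∀ i, i ≤ f i}

lemma mem_dyckMaps {f : Fin n → Fin n} :
    f ∈ dyckMaps n ↔ Monotone f ∧ ∀ i, i ≤ f i := by
  simp [dyckMaps]

variable {p : Fin (n + 1)} {f : Fin (n + 1) → Fin (n + 1)}

lemma IsSplitAt.lt_apply_of_lower_mem_dyckMaps (hf : IsSplitAt p p f)
    (hl : lower p f ∈ dyckMaps p) {i : Fin (n + 1)} (hi : (i : ℕ) < p) : (i : ℕ) < f i := by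
  have h := (mem_dyckMaps.1 hl).2 ⟨i, hi⟩
  simp only [Fin.le_def] at h
  have := hf.apply_of_lt hi
  omega

lemma IsSplitAt.monotone (hf : IsSplitAt p p f) (hl : Monotone (lower p f))
    (hu : Monotone (upper p f)) : Monotone f := by
  intro i j hij
  rw [Fin.le_def] at hij ⊢
  by_cases hj : (j : ℕ) < p
  · have := hl (show (⟨i, by omega⟩ : Fin p) ≤ ⟨j, hj⟩ from hij)
    have := hf.apply_of_lt (i := i) (by omega)
    have := hf.apply_of_lt hj
    omega
  by_cases hi : (p : ℕ) < i
  · have := hu (show (⟨i - (p + 1), by omega⟩ : Fin (n - p)) ≤ ⟨j - (p + 1), by omega⟩ by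
      simp only [Fin.mk_le_mk]; omega)
    have := hf.apply_of_gt hi
    have := hf.apply_of_gt (i := j) (by omega)
    omega
  have hfi : (f i : ℕ) ≤ p := by
    rcases (not_lt.1 hi).lt_or_eq with hi | hi
    · exact (hf.2.1 i hi).2
    · rw [show i = p from Fin.ext hi, hf.1]
  have hfj : (p : ℕ) ≤ f j := by
    rcases (not_lt.1 hj).lt_or_eq with hj | hj
    · exact (hf.2.2 j hj).le
    · rw [show j = p from Fin.ext hj.symm, hf.1]
  omega

lemma mem_dyckMaps_of_isSplitAt (hf : IsSplitAt p p f) (hl : lower p f ∈ dyckMaps p)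
    (hu : upper p f ∈ dyckMaps (n - p)) : f ∈ dyckMaps (n + 1) := by
  refine mem_dyckMaps.2 ⟨hf.monotone (mem_dyckMaps.1 hl).1 (mem_dyckMaps.1 hu).1, fun i => ?_⟩
  rcases lt_trichotomy (i : ℕ) p with hi | hi | hi
  · exact (hf.lt_apply_of_lower_mem_dyckMaps hl hi).le
  · rw [show i = p from Fin.ext hi, hf.1]
  · have h := (mem_dyckMaps.1 hu).2 ⟨i - (p + 1), by omega⟩
    simp only [Fin.le_def] at h
    have := hf.apply_of_gt hi
    rw [Fin.le_def]
    omega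

lemma exists_isSplitAt_of_mem_dyckMaps (hf : f ∈ dyckMaps (n + 1)) :
    ∃ p, IsSplitAt p p f ∧ lower p f ∈ dyckMaps p ∧ upper p f ∈ dyckMaps (n - p) := by
  obtain ⟨hmono, hge⟩ := mem_dyckMaps.1 hf
  obtain ⟨p, hp, hmin⟩ := WellFounded.has_min wellFounded_lt {p | f p = p}
    ⟨Fin.last n, le_antisymm (Fin.le_last _) (hge _)⟩
  have hlt (i : Fin (n + 1)) (hi : (i : ℕ) < p) : (i : ℕ) < f i :=
    (hge i).lt_of_ne fun h => hmin i h.symm hi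
  have hs : IsSplitAt p p f := by
    refine ⟨hp, fun i hi => ?_, fun i hi => ?_⟩
    · have := hlt i hi
      have := hmono (show i ≤ p from hi.le)
      rw [hp] at this
      omega
    · have := hge i
      omega
  refine ⟨p, hs, mem_dyckMaps.2 ⟨fun i j hij => ?_, fun i => ?_⟩,
    mem_dyckMaps.2 ⟨fun i j hij => ?_, fun j => ?_⟩⟩
  · have := hmono (show (⟨i, by omega⟩ : Fin (n + 1)) ≤ ⟨j, by omega⟩ from hij)
    have := hs.lower_val i
    have := hs.lower_val j
    omega
  · have := hlt ⟨i, by omega⟩ i.isLt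
    have := hs.lower_val i
    simp only [Fin.le_def] at *
    omega
  · have := hmono (show (⟨p + 1 + i, by omega⟩ : Fin (n + 1)) ≤ ⟨p + 1 + j, by omega⟩ by
      simp only [Fin.mk_le_mk]; omega)
    have := hs.upper_val i
    have := hs.upper_val j
    omega
  · have := hge ⟨p + 1 + j, by omega⟩
    have := hs.upper_val j
    simp only [Fin.le_def] at *
    omega

lemma IsSplitAt.le_of_lower_mem_dyckMaps {q : Fin (n + 1)} (hp : IsSplitAt p p f)
    (hq : IsSplitAt q q f) (hl : lower q f ∈ dyckMaps q) : q ≤ p := by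
  by_contra h
  have := hq.lt_apply_of_lower_mem_dyckMaps hl (i := p) (not_le.1 h)
  rw [hp.1] at this
  exact lt_irrefl _ this

theorem card_dyckMaps (n : ℕ) : #(dyckMaps n) = catalan n := by
  refine card_eq_catalan_of_split dyckMaps (fun _ p => p) ?_ (fun n f => ?_)
    (fun n f p q hp hlp hq hlq => le_antisymm (hq.le_of_lower_mem_dyckMaps hp hlp)
      (hp.le_of_lower_mem_dyckMaps hq hlq)) n
  · exact card_eq_one.2
      ⟨id, by ext f; simp [mem_dyckMaps, Subsingleton.elim f id, monotone_id]⟩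
  · exact ⟨exists_isSplitAt_of_mem_dyckMaps,
      fun ⟨p, hs, hl, hu⟩ => mem_dyckMaps_of_isSplitAt hs hl hu⟩

end Dyck

section Avoid312

open Classical in
noncomputable def av312 (n : ℕ) : Finset (Fin n → Fin n) :=
  ({π | Avoids312 π} : Finset (Equiv.Perm (Fin n))).map ⟨DFunLike.coe, DFunLike.coe_injective⟩

lemma mem_av312 {f : Fin n → Fin n} : f ∈ av312 n ↔
    Function.Injective f ∧ ∀ i j k, i < j → j < k → ¬ (f j < f k ∧ f k < f i) := by
  simp only [av312, mem_map, mem_filter, mem_univ, true_and, Function.Embedding.coeFn_mk]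
  refine ⟨?_, fun ⟨hf, h⟩ =>
    ⟨Equiv.ofBijective f (Finite.injective_iff_bijective.1 hf), h, rfl⟩⟩
  rintro ⟨π, hπ, rfl⟩
  exact ⟨π.injective, hπ⟩

lemma card_subtype_avoids312 : Nat.card {π : Equiv.Perm (Fin n) // Avoids312 π} = #(av312 n) := by
  classical
  rw [av312, card_map, Nat.card_eq_fintype_card, Fintype.card_subtype]

lemma card_av312_zero : #(av312 0) = 1 := by
  rw [← card_subtype_avoids312, Nat.card_eq_one_iff_unique]
  refine ⟨⟨fun a b => Subtype.ext (Subsingleton.elim _ _)⟩, ⟨⟨1, fun i => i.elim0⟩⟩⟩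

lemma mem_av312_of_comp {m : ℕ} {f : Fin n → Fin n} {g : Fin m → Fin m}
    {e s : Fin m → Fin n} (he : StrictMono e) (hs : StrictMono s) (h : ∀ i, f (e i) = s (g i))
    (hf : f ∈ av312 n) : g ∈ av312 m := by
  rw [mem_av312] at hf ⊢
  refine ⟨fun i j hij => he.injective (hf.1 (by rw [h, h, hij])), fun i j k hij hjk hg => ?_⟩
  refine hf.2 (e i) (e j) (e k) (he hij) (he hjk) ?_
  rw [h, h, h]
  exact ⟨hs hg.1, hs hg.2⟩

variable {p : Fin (n + 1)} {f : Fin (n + 1) → Fin (n + 1)}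

lemma IsSplitAt.lower_mem_av312 {v : Fin (n + 1)} (hf : IsSplitAt p v f) (h : f ∈ av312 (n + 1)) :
    lower p f ∈ av312 p :=
  mem_av312_of_comp (e := fun i : Fin p => (⟨i, by omega⟩ : Fin (n + 1)))
    (s := fun x : Fin p => (⟨x + 1, by omega⟩ : Fin (n + 1)))
    (fun _ _ h => h) (fun _ _ h => Nat.succ_lt_succ h) (fun i => Fin.ext (hf.lower_val i).symm) h

lemma IsSplitAt.upper_mem_av312 {v : Fin (n + 1)} (hf : IsSplitAt p v f) (h : f ∈ av312 (n + 1)) :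
    upper p f ∈ av312 (n - p) :=
  mem_av312_of_comp (e := fun j : Fin (n - p) => (⟨p + 1 + j, by omega⟩ : Fin (n + 1)))
    (s := fun y : Fin (n - p) => (⟨y + (p + 1), by omega⟩ : Fin (n + 1)))
    (fun _ _ h => Nat.add_lt_add_left h _) (fun _ _ h => Nat.add_lt_add_right h _)
    (fun j => Fin.ext (hf.upper_val j).symm) h

lemma isSplitAt_of_mem_av312 (h : f ∈ av312 (n + 1)) (hp : f p = 0) : IsSplitAt p 0 f := by
  obtain ⟨hinj, hav⟩ := mem_av312.1 h
  have hpos (i : Fin (n + 1)) (hi : i ≠ p) : 0 < f i :=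
    Fin.pos_iff_ne_zero.2 fun h0 => hi (hinj (h0.trans hp.symm))
  have hcross (i k : Fin (n + 1)) (hi : i < p) (hk : p < k) : f i < f k := by
    refine (le_of_not_gt fun hki => hav i p k hi hk ⟨?_, hki⟩).lt_of_ne ?_
    · rw [hp]; exact hpos k hk.ne'
    · exact fun e => (hi.trans hk).ne (hinj e)
  refine ⟨hp, fun i hi => ⟨hpos i (Fin.ne_of_lt hi), ?_⟩, fun k hk => ?_⟩
  · have := card_le_card_of_injOn f (s := Ioi p) (t := Ioi (f i))
      (fun k hk => mem_Ioi.2 (hcross i k hi (mem_Ioi.1 hk))) hinj.injOn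
    simp only [Fin.card_Ioi] at this
    omega
  · have := card_le_card_of_injOn f (s := Iic p) (t := Iio (f k))
      (fun i hi => mem_Iio.2 ?_) hinj.injOn
    · simp only [Fin.card_Iic, Fin.card_Iio] at this
      omega
    rcases (mem_Iic.1 hi).lt_or_eq with hi | rfl
    · exact hcross i k hi hk
    · rw [hp]; exact hpos k (Fin.ne_of_gt hk)

lemma IsSplitAt.surjective (hf : IsSplitAt p 0 f) (hl : Function.Surjective (lower p f))
    (hu : Function.Surjective (upper p f)) : Function.Surjective f := by
  intro y
  rcases Nat.eq_zero_or_pos y with hy | hy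
  · exact ⟨p, hf.1.trans (Fin.ext hy.symm)⟩
  by_cases hyp : (y : ℕ) ≤ p
  · obtain ⟨i, hi⟩ := hl ⟨y - 1, by omega⟩
    refine ⟨⟨i, by omega⟩, Fin.ext ?_⟩
    rw [← hf.lower_val i, hi]
    simp only
    omega
  · obtain ⟨j, hj⟩ := hu ⟨y - (p + 1), by omega⟩
    refine ⟨⟨p + 1 + j, by omega⟩, Fin.ext ?_⟩
    rw [← hf.upper_val j, hj]
    simp only
    omega

lemma mem_av312_of_isSplitAt (hf : IsSplitAt p 0 f) (hl : lower p f ∈ av312 p)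
    (hu : upper p f ∈ av312 (n - p)) : f ∈ av312 (n + 1) := by
  rw [mem_av312] at hl hu ⊢
  refine ⟨Finite.injective_iff_surjective.2 (hf.surjective
    (Finite.injective_iff_surjective.1 hl.1) (Finite.injective_iff_surjective.1 hu.1)),
    fun i j k hij hjk ⟨h1, h2⟩ => ?_⟩
  rcases lt_trichotomy (i : ℕ) p with hi | hi | hi
  · have hk : (k : ℕ) < p := by
      have := (hf.2.1 i hi).2
      rcases lt_trichotomy (k : ℕ) p with hk | hk | hk
      · exact hk
      · rw [show k = p from Fin.ext hk, hf.1] at h1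
        exact absurd h1 (Fin.not_lt_zero _)
      · have := hf.2.2 k hk
        omega
    have := hf.apply_of_lt hi
    have := hf.apply_of_lt (i := j) (by omega)
    have := hf.apply_of_lt hk
    refine hl.2 ⟨i, hi⟩ ⟨j, by omega⟩ ⟨k, hk⟩ hij hjk ⟨?_, ?_⟩ <;>
    · simp only [Fin.lt_def] at *
      omega
  · rw [show i = p from Fin.ext hi, hf.1] at h2
    exact absurd h2 (Fin.not_lt_zero _)
  · have hj : (p : ℕ) < j := hi.trans hij
    have hk : (p : ℕ) < k := hj.trans hjk
    have := hf.apply_of_gt hi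
    have := hf.apply_of_gt hj
    have := hf.apply_of_gt hk
    refine hu.2 ⟨i - (p + 1), by omega⟩ ⟨j - (p + 1), by omega⟩ ⟨k - (p + 1), by omega⟩
      (by simp only [Fin.mk_lt_mk]; omega) (by simp only [Fin.mk_lt_mk]; omega) ⟨?_, ?_⟩ <;>
    · simp only [Fin.lt_def] at *
      omega

lemma IsSplitAt.le_of_isSplitAt_zero {q : Fin (n + 1)} (hp : IsSplitAt p 0 f)
    (hq : IsSplitAt q 0 f) : q ≤ p := by
  by_contra h
  have := (hq.2.1 p (not_le.1 h)).1
  rw [hp.1] at this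
  exact Nat.lt_irrefl 0 this

theorem card_av312 (n : ℕ) : #(av312 n) = catalan n := by
  refine card_eq_catalan_of_split av312 (fun _ _ => 0) card_av312_zero (fun n f => ⟨fun h => ?_,
    fun ⟨p, hs, hl, hu⟩ => mem_av312_of_isSplitAt hs hl hu⟩)
    (fun n f p q hp _ hq _ => le_antisymm (hq.le_of_isSplitAt_zero hp)
      (hp.le_of_isSplitAt_zero hq)) n
  obtain ⟨p, hp⟩ := Finite.injective_iff_surjective.1 (mem_av312.1 h).1 0
  have hs := isSplitAt_of_mem_av312 h hp
  exact ⟨p, hs, hs.lower_mem_av312 h, hs.upper_mem_av312 h⟩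

end Avoid312

lemma avoids321_of_strictMonoOn {π : Equiv.Perm (Fin n)} (s : Set (Fin n))
    (hs : StrictMonoOn π s) (hsc : StrictMonoOn π sᶜ) : Avoids321 π := by
  have hsplit (a b : Fin n) (hab : a < b) (hba : π b < π a) : ¬ (a ∈ s ↔ b ∈ s) := by
    intro hiff
    by_cases ha : a ∈ s
    · exact (hs ha (hiff.1 ha) hab).not_gt hba
    · exact (hsc ha (mt hiff.2 ha) hab).not_gt hba
  intro i j k hij hjk ⟨hkj, hji⟩
  have := hsplit i j hij hji
  have := hsplit j k hjk hkj
  exact hsplit i k (hij.trans hjk) (hkj.trans hji) (by tauto)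

section RunningMax

def runningMax (π : Equiv.Perm (Fin n)) (p : Fin n) : Fin n := (Iic p).sup' nonempty_Iic π

lemma le_runningMax (π : Equiv.Perm (Fin n)) {p q : Fin n} (h : q ≤ p) :
    π q ≤ runningMax π p :=
  le_sup' π (mem_Iic.2 h)

lemma exists_eq_runningMax (π : Equiv.Perm (Fin n)) (p : Fin n) :
    ∃ q ≤ p, π q = runningMax π p := by
  obtain ⟨q, hq, h⟩ := exists_mem_eq_sup' nonempty_Iic π
  exact ⟨q, mem_Iic.1 hq, h.symm⟩

lemma runningMax_mem_dyckMaps (π : Equiv.Perm (Fin n)) : runningMax π ∈ dyckMaps n := by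
  refine mem_dyckMaps.2 ⟨fun p q h => sup'_mono π (Iic_subset_Iic.2 h) _, fun p => ?_⟩
  have := card_le_card_of_injOn π (s := Iic p) (t := Iic (runningMax π p))
    (fun q hq => mem_Iic.2 (le_runningMax π (mem_Iic.1 hq))) π.injective.injOn
  simp only [Fin.card_Iic] at this
  omega

-- The value `π p` occurs in `σ` after `p`, below `σ p` and below the earlier maximum: a 321.
lemma Avoids321.not_lt_of_runningMax_eq {π σ : Equiv.Perm (Fin n)} (hσ : Avoids321 σ)
    {p : Fin n} (hagree : ∀ q < p, π q = σ q) (hr : runningMax π p = runningMax σ p) :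
    ¬ π p < σ p := by
  intro hlt
  obtain ⟨q, hqp, hq⟩ := exists_eq_runningMax π p
  have hσp : σ p ≤ π q := hq ▸ hr ▸ le_runningMax σ le_rfl
  have hqp : q < p := hqp.lt_of_ne fun e => (hlt.trans_le hσp).ne (e ▸ rfl)
  have hσq : σ p < σ q := by
    rw [← hagree q hqp]
    exact hσp.lt_of_ne fun e => hqp.ne' (σ.injective (e.trans (hagree q hqp)))
  set k := σ.symm (π p)
  have hk : σ k = π p := σ.apply_symm_apply _
  have hpk : p < k := by
    refine lt_of_le_of_ne (le_of_not_gt fun hkp => ?_) fun e => hlt.ne (by rw [← hk, e])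
    exact hkp.ne (π.injective ((hagree k hkp).trans hk))
  exact hσ q p k hqp hpk ⟨hk ▸ hlt, hσq⟩

lemma runningMax_injOn :
    Set.InjOn runningMax {π : Equiv.Perm (Fin n) | Avoids321 π} := by
  intro π hπ σ hσ h
  by_contra hne
  obtain ⟨p, hp, hmin⟩ := WellFounded.has_min wellFounded_lt {p | π p ≠ σ p}
    (not_forall.1 fun h' => hne (Equiv.ext h'))
  have hagree (q : Fin n) (hq : q < p) : π q = σ q := not_not.1 fun h' => hmin q h' hq
  rcases lt_or_gt_of_ne hp with hlt | hlt
  · exact Avoids321.not_lt_of_runningMax_eq hσ hagree (congrFun h p) hlt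
  · exact Avoids321.not_lt_of_runningMax_eq hπ (fun q hq => (hagree q hq).symm)
      (congrFun h p).symm hlt

end RunningMax

lemma card_filter_lt_orderEmbOfFin (s : Finset (Fin n)) {k : ℕ} (h : #s = k) (t : Fin k) :
    #{v ∈ s | v < s.orderEmbOfFin h t} = t := by
  have : {v ∈ s | v < s.orderEmbOfFin h t} = (Iio t).map (s.orderEmbOfFin h).toEmbedding := by
    ext v
    simp only [mem_filter, mem_map, mem_Iio, RelEmbedding.coe_toEmbedding]
    constructor
    · rintro ⟨hv, hvt⟩
      obtain ⟨u, rfl⟩ : v ∈ Set.range (s.orderEmbOfFin h) := by rwa [range_orderEmbOfFin]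
      exact ⟨u, (s.orderEmbOfFin h).lt_iff_lt.1 hvt, rfl⟩
    · rintro ⟨u, hu, rfl⟩
      exact ⟨orderEmbOfFin_mem s h u, (s.orderEmbOfFin h).lt_iff_lt.2 hu⟩
  rw [this, card_map, Fin.card_Iio]

lemma card_filter_lt_add_card_compl_filter_lt (s : Finset (Fin n)) (x : Fin n) :
    #{y ∈ s | y < x} + #{y ∈ sᶜ | y < x} = x := by
  rw [← Fin.card_Iio x, ← card_filter_add_card_filter_not (s := Iio x) (p := (· ∈ s))]
  congr 2 <;> ext y <;> simp [and_comm]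

section Fill

def records (m : Fin n → Fin n) : Finset (Fin n) := {p | ∀ q < p, m q < m p}

variable {m : Fin n → Fin n}

lemma lt_of_mem_records {p q : Fin n} (hp : p ∈ records m) (hq : q < p) : m q < m p :=
  (mem_filter.1 hp).2 q hq

lemma exists_mem_records (hm : Monotone m) (p : Fin n) :
    ∃ s ∈ records m, s ≤ p ∧ m s = m p := by
  obtain ⟨s, hs, hmin⟩ := WellFounded.has_min wellFounded_lt {s | m s = m p} ⟨p, rfl⟩
  have hsp : s ≤ p := le_of_not_gt fun h => hmin p rfl h
  refine ⟨s, mem_filter.2 ⟨mem_univ _, fun q hq => ?_⟩, hsp, hs⟩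
  exact (hm hq.le).lt_of_ne fun e => hmin q (e.trans hs) hq

lemma card_compl_image_records (m : Fin n → Fin n) :
    #((records m).image m)ᶜ = #(records m)ᶜ := by
  rw [card_compl, card_compl, card_image_of_injOn fun p hp q hq h => ?_]
  rcases lt_trichotomy p q with hpq | rfl | hpq
  · exact absurd h (lt_of_mem_records hq hpq).ne
  · rfl
  · exact absurd h (lt_of_mem_records hp hpq).ne'

-- Off the records, the `k`-th position receives the `k`-th value outside the range of `m`.
noncomputable def fill (m : Fin n → Fin n) (p : Fin n) : Fin n :=
  if h : p ∈ records m then m p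
  else ((records m).image m)ᶜ.orderEmbOfFin (card_compl_image_records m)
    ⟨#{q ∈ (records m)ᶜ | q < p},
      card_lt_card (filter_ssubset.2 ⟨p, mem_compl.2 h, lt_irrefl p⟩)⟩

lemma fill_of_mem {p : Fin n} (h : p ∈ records m) : fill m p = m p := dif_pos h

lemma fill_mem_compl_image {p : Fin n} (h : p ∉ records m) :
    fill m p ∈ ((records m).image m)ᶜ := by
  rw [fill, dif_neg h]
  exact orderEmbOfFin_mem _ _ _

lemma card_filter_lt_fill {p : Fin n} (h : p ∉ records m) :
    #{v ∈ ((records m).image m)ᶜ | v < fill m p} = #{q ∈ (records m)ᶜ | q < p} := by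
  rw [fill, dif_neg h, card_filter_lt_orderEmbOfFin]

lemma strictMonoOn_fill : StrictMonoOn (fill m) (↑(records m))ᶜ := by
  intro p (hp : p ∉ records m) q (hq : q ∉ records m) hpq
  rw [fill, fill, dif_neg hp, dif_neg hq, OrderEmbedding.lt_iff_lt, Fin.mk_lt_mk]
  refine card_lt_card
    ⟨fun x hx => mem_filter.2 ⟨(mem_filter.1 hx).1, (mem_filter.1 hx).2.trans hpq⟩,
      fun hsub => ?_⟩
  exact lt_irrefl p (mem_filter.1 (hsub (mem_filter.2 ⟨mem_compl.2 hp, hpq⟩))).2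

lemma fill_injective : Function.Injective (fill m) := by
  intro p q h
  by_cases hp : p ∈ records m <;> by_cases hq : q ∈ records m
  · rw [fill_of_mem hp, fill_of_mem hq] at h
    rcases lt_trichotomy p q with hpq | rfl | hpq
    · exact absurd h (lt_of_mem_records hq hpq).ne
    · rfl
    · exact absurd h (lt_of_mem_records hp hpq).ne'
  · have := fill_mem_compl_image hq
    rw [← h, fill_of_mem hp] at this
    exact absurd (mem_image_of_mem m hp) (mem_compl.1 this)
  · have := fill_mem_compl_image hp
    rw [h, fill_of_mem hq] at this
    exact absurd (mem_image_of_mem m hq) (mem_compl.1 this)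
  · exact strictMonoOn_fill.injOn hp hq h

lemma fill_lt (hm : m ∈ dyckMaps n) {p : Fin n} (h : p ∉ records m) : fill m p < m p := by
  obtain ⟨hmono, hge⟩ := mem_dyckMaps.1 hm
  have hW :
      #(insert (m p) {w ∈ (records m).image m | w < m p}) ≤ #{s ∈ records m | s < p} := by
    refine le_trans (card_le_card fun w hw => ?_) (card_image_le (f := m))
    rcases mem_insert.1 hw with rfl | hw
    · obtain ⟨s, hs, hsp, hsm⟩ := exists_mem_records hmono p
      exact mem_image.2
        ⟨s, mem_filter.2 ⟨hs, hsp.lt_of_ne (by rintro rfl; exact h hs)⟩, hsm⟩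
    · obtain ⟨hw, hwp⟩ := mem_filter.1 hw
      obtain ⟨s, hs, rfl⟩ := mem_image.1 hw
      exact mem_image.2
        ⟨s, mem_filter.2 ⟨hs, lt_of_not_ge fun hps => (hmono hps).not_gt hwp⟩, rfl⟩
  rw [card_insert_of_notMem (by simp)] at hW
  refine lt_of_not_ge fun hle => ?_
  have hV := card_le_card (s := {v ∈ ((records m).image m)ᶜ | v < m p})
    (t := {v ∈ ((records m).image m)ᶜ | v < fill m p})
    fun v hv => mem_filter.2 ⟨(mem_filter.1 hv).1, (mem_filter.1 hv).2.trans_le hle⟩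
  rw [card_filter_lt_fill h] at hV
  have := card_filter_lt_add_card_compl_filter_lt ((records m).image m) (m p)
  have := card_filter_lt_add_card_compl_filter_lt (records m) p
  have := hge p
  omega

lemma fill_le (hm : m ∈ dyckMaps n) (p : Fin n) : fill m p ≤ m p :=
  if h : p ∈ records m then (fill_of_mem h).le else (fill_lt hm h).le

noncomputable def fillPerm (m : Fin n → Fin n) : Equiv.Perm (Fin n) :=
  Equiv.ofBijective (fill m) (Finite.injective_iff_bijective.1 fill_injective)

lemma avoids321_fillPerm (m : Fin n → Fin n) : Avoids321 (fillPerm m) := by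
  refine avoids321_of_strictMonoOn (records m : Set (Fin n)) (fun p hp q hq hpq => ?_)
    strictMonoOn_fill
  simp only [fillPerm, Equiv.ofBijective_apply]
  rw [fill_of_mem hp, fill_of_mem hq]
  exact lt_of_mem_records hq hpq

lemma runningMax_fillPerm (hm : m ∈ dyckMaps n) : runningMax (fillPerm m) = m := by
  have hmono := (mem_dyckMaps.1 hm).1
  funext p
  refine le_antisymm (sup'_le _ _ fun q hq => (fill_le hm q).trans (hmono (mem_Iic.1 hq))) ?_
  obtain ⟨s, hs, hsp, hsm⟩ := exists_mem_records hmono p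
  rw [← hsm, ← fill_of_mem hs]
  exact le_runningMax (fillPerm m) hsp

theorem card_subtype_avoids321 :
    Nat.card {π : Equiv.Perm (Fin n) // Avoids321 π} = #(dyckMaps n) := by
  rw [← Nat.card_eq_finsetCard]
  refine Nat.card_eq_of_bijective (fun π => ⟨runningMax π.1, runningMax_mem_dyckMaps π.1⟩)
    ⟨fun π σ h => Subtype.ext (runningMax_injOn π.2 σ.2 (congrArg Subtype.val h)), ?_⟩
  rintro ⟨m, hm⟩
  exact ⟨⟨fillPerm m, avoids321_fillPerm m⟩, Subtype.ext (runningMax_fillPerm hm)⟩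

end Fill

/-- `|Av_n(321)| = catalan n`, and hence `Av(312)` and `Av(321)` are Wilf-equivalent. -/
theorem stmt2 :
    (∀ n : ℕ, Nat.card {π : Equiv.Perm (Fin n) // Avoids321 π} = catalan n) ∧
    (∀ n : ℕ, Nat.card {π : Equiv.Perm (Fin n) // Avoids312 π} =
      Nat.card {π : Equiv.Perm (Fin n) // Avoids321 π}) := by
  have h321 (n : ℕ) : Nat.card {π : Equiv.Perm (Fin n) // Avoids321 π} = catalan n := by
    rw [card_subtype_avoids321, card_dyckMaps]
  refine ⟨h321, fun n => ?_⟩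
  rw [h321, card_subtype_avoids312, card_av312]
end

section
/- A permutation π of length n lies in Av(231,312,321) if and only if π is a direct sum of copies of the permutations 1 and 21. Consequently, |Av_n(231,312,321)| = F_n, the n-th Fibonacci number with F_0 = F_1 = 1 and F_n = F_{n−1} + F_{n−2}. -/
/-!
The patterns 231, 312 and 321 are exactly the patterns of length three whose last entry is
smaller than their first. So `π` avoids all three iff `π i < π k` whenever `k ≥ i + 2`, that is,
iff every inversion of `π` sits at two adjacent positions. Then the entries smaller than `π i`
all sit at positions before `i` or at `i + 1`, so `π i ≤ i + 1`, and `π i = i + 1` forces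
`π (i + 1) = i`; symmetrically `i ≤ π i + 1`. Hence `π` is a product of disjoint adjacent
transpositions. Such a permutation of `n + 2` points begins either with the block `1` or with
the block `21`, followed by one of the same kind on `n + 1`, resp. `n`, points: this is the
Fibonacci recursion.
-/

def Avoids231 {n : ℕ} (π : Equiv.Perm (Fin n)) : Prop :=
  ∀ i j k : Fin n, i < j → j < k → ¬ (π k < π i ∧ π i < π j)

/-- `π` is a direct sum of copies of `1` and `21`, i.e. a product of disjoint
adjacent transpositions: it is an involution that moves every point by at most one. -/
def IsDirectSumOf1And21 {n : ℕ} (π : Equiv.Perm (Fin n)) : Prop :=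
  ∀ i : Fin n, π (π i) = i ∧
    ((π i : ℕ) = (i : ℕ) ∨ (π i : ℕ) = (i : ℕ) + 1 ∨ (π i : ℕ) + 1 = (i : ℕ))

open Equiv Finset

section Characterization

variable {n : ℕ}

def HasOnlyAdjacentInversions (π : Perm (Fin n)) : Prop :=
  ∀ i j k : Fin n, i < j → j < k → π i < π k

theorem avoids231_and_avoids312_and_avoids321_iff (π : Perm (Fin n)) :
    (Avoids231 π ∧ Avoids312 π ∧ Avoids321 π) ↔ HasOnlyAdjacentInversions π := by
  constructor
  · rintro ⟨h231, h312, h321⟩ i j k hij hjk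
    by_contra! hki
    have hki : π k < π i := lt_of_le_of_ne hki (π.injective.ne (ne_of_gt (hij.trans hjk)))
    rcases lt_trichotomy (π j) (π k) with hjk' | hjk' | hkj'
    · exact h312 i j k hij hjk ⟨hjk', hki⟩
    · exact (ne_of_lt hjk) (π.injective hjk')
    · rcases lt_trichotomy (π j) (π i) with hji | hji | hij'
      · exact h321 i j k hij hjk ⟨hkj', hji⟩
      · exact (ne_of_gt hij) (π.injective hji)
      · exact h231 i j k hij hjk ⟨hki, hij'⟩
  · intro h
    refine ⟨?_, ?_, ?_⟩ <;> intro i j k hij hjk hpat <;> have := h i j k hij hjk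
    · exact lt_asymm this hpat.1
    · exact lt_asymm this hpat.2
    · exact lt_asymm this (hpat.1.trans hpat.2)

theorem Equiv.Perm.card_filter_apply_lt (σ : Perm (Fin n)) (a : Fin n) :
    #{q | σ q < a} = a := by
  rw [← Fin.card_Iio a]
  exact card_equiv σ (by simp)

theorem Fin.card_filter_val_eq_le_one (m : ℕ) (p : Fin n → Prop) [DecidablePred p] :
    #{q : Fin n | (q : ℕ) = m ∧ p q} ≤ 1 :=
  card_le_one.2 fun a ha b hb => by
    simp only [mem_filter] at ha hb
    exact Fin.ext (ha.2.1.trans hb.2.1.symm)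

namespace HasOnlyAdjacentInversions

variable {π : Perm (Fin n)}

theorem apply_lt_apply_of_add_one_lt (h : HasOnlyAdjacentInversions π) {i k : Fin n}
    (hik : (i : ℕ) + 1 < k) : π i < π k :=
  h i ⟨i + 1, by omega⟩ k (Fin.lt_def.2 (by simp)) (Fin.lt_def.2 (by simpa using hik))

theorem val_apply_le_add_card (h : HasOnlyAdjacentInversions π) (i : Fin n) :
    (π i : ℕ) ≤ i + #{q : Fin n | (q : ℕ) = i + 1 ∧ π q < π i} := by
  calc (π i : ℕ) = #{q | π q < π i} := (π.card_filter_apply_lt (π i)).symm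
    _ ≤ #(Iio i ∪ ({q : Fin n | (q : ℕ) = i + 1 ∧ π q < π i} : Finset _)) := by
        refine card_le_card fun q hq => ?_
        simp only [mem_filter, mem_univ, true_and] at hq
        simp only [mem_union, mem_Iio, mem_filter, mem_univ, true_and]
        rcases lt_trichotomy q i with hqi | rfl | hiq
        · exact .inl hqi
        · exact absurd hq (lt_irrefl _)
        · have : ¬ (i : ℕ) + 1 < q := fun hlt => lt_asymm hq (h.apply_lt_apply_of_add_one_lt hlt)
          exact .inr ⟨by rw [Fin.lt_def] at hiq; omega, hq⟩
    _ ≤ i + #{q : Fin n | (q : ℕ) = i + 1 ∧ π q < π i} := by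
        grw [card_union_le, Fin.card_Iio]

theorem val_le_apply_add_card (h : HasOnlyAdjacentInversions π) (i : Fin n) :
    (i : ℕ) ≤ π i + #{q : Fin n | (q : ℕ) = i - 1 ∧ π i < π q} := by
  calc (i : ℕ) = #(Iio i) := (Fin.card_Iio i).symm
    _ ≤ #(({q | π q < π i} : Finset _) ∪
          ({q : Fin n | (q : ℕ) = i - 1 ∧ π i < π q} : Finset _)) := by
        refine card_le_card fun q hq => ?_
        simp only [mem_Iio] at hq
        simp only [mem_union, mem_filter, mem_univ, true_and]
        rcases lt_or_gt_of_ne (π.injective.ne (ne_of_lt hq)) with hlt | hgt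
        · exact .inl hlt
        · have : ¬ (q : ℕ) + 1 < i := fun hlt => lt_asymm hgt (h.apply_lt_apply_of_add_one_lt hlt)
          exact .inr ⟨by rw [Fin.lt_def] at hq; omega, hgt⟩
    _ ≤ π i + #{q : Fin n | (q : ℕ) = i - 1 ∧ π i < π q} := by
        grw [card_union_le, π.card_filter_apply_lt]

theorem val_apply_le_add_one (h : HasOnlyAdjacentInversions π) (i : Fin n) :
    (π i : ℕ) ≤ i + 1 :=
  (h.val_apply_le_add_card i).trans (by grw [Fin.card_filter_val_eq_le_one])

theorem val_le_apply_add_one (h : HasOnlyAdjacentInversions π) (i : Fin n) :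
    (i : ℕ) ≤ π i + 1 :=
  (h.val_le_apply_add_card i).trans (by grw [Fin.card_filter_val_eq_le_one])

theorem apply_apply (h : HasOnlyAdjacentInversions π) (i : Fin n) : π (π i) = i := by
  have hup := h.val_apply_le_add_card i
  have hlow := h.val_le_apply_add_card i
  rcases (by have := h.val_apply_le_add_one i; have := h.val_le_apply_add_one i; omega :
      (π i : ℕ) = i ∨ (π i : ℕ) = i + 1 ∨ (π i : ℕ) + 1 = i) with hfix | hright | hleft
  · rw [Fin.ext hfix, Fin.ext hfix]
  · obtain ⟨q, hq⟩ := card_pos.1 (by omega : 0 < #{q : Fin n | (q : ℕ) = i + 1 ∧ π q < π i})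
    simp only [mem_filter, mem_univ, true_and] at hq
    have := h.val_le_apply_add_one q
    have hπq : π q = i := Fin.ext (by rw [Fin.lt_def] at hq; omega)
    rw [show π i = q from Fin.ext (by omega), hπq]
  · obtain ⟨q, hq⟩ := card_pos.1 (by omega : 0 < #{q : Fin n | (q : ℕ) = i - 1 ∧ π i < π q})
    simp only [mem_filter, mem_univ, true_and] at hq
    have := h.val_apply_le_add_one q
    have hπq : π q = i := Fin.ext (by rw [Fin.lt_def] at hq; omega)
    rw [show π i = q from Fin.ext (by omega), hπq]

theorem isDirectSumOf1And21 (h : HasOnlyAdjacentInversions π) : IsDirectSumOf1And21 π :=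
  fun i => ⟨h.apply_apply i, by
    have := h.val_apply_le_add_one i; have := h.val_le_apply_add_one i; omega⟩

end HasOnlyAdjacentInversions

theorem IsDirectSumOf1And21.hasOnlyAdjacentInversions {π : Perm (Fin n)}
    (h : IsDirectSumOf1And21 π) : HasOnlyAdjacentInversions π := by
  intro i j k hij hjk
  have hne : (π i : ℕ) ≠ π k := Fin.val_ne_of_ne (π.injective.ne (ne_of_lt (hij.trans hjk)))
  have hi := (h i).2
  have hk := (h k).2
  rw [Fin.lt_def] at hij hjk ⊢
  omega

theorem hasOnlyAdjacentInversions_iff_isDirectSumOf1And21 (π : Perm (Fin n)) :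
    HasOnlyAdjacentInversions π ↔ IsDirectSumOf1And21 π :=
  ⟨HasOnlyAdjacentInversions.isDirectSumOf1And21,
    IsDirectSumOf1And21.hasOnlyAdjacentInversions⟩

end Characterization

theorem avoids231_and_avoids312_and_avoids321_iff_isDirectSumOf1And21 (n : ℕ)
    (π : Perm (Fin n)) : (Avoids231 π ∧ Avoids312 π ∧ Avoids321 π) ↔ IsDirectSumOf1And21 π :=
  (avoids231_and_avoids312_and_avoids321_iff π).trans
    (hasOnlyAdjacentInversions_iff_isDirectSumOf1And21 π)

section Counting

open Equiv.Perm (decomposeFin decomposeFin_symm_apply_zero decomposeFin_symm_apply_succ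
  decomposeFin_symm_apply_one)

variable {n : ℕ}

-- `decomposeFin.symm (0, σ)` is `1 ⊕ σ` and `decomposeFin.symm (1, decomposeFin.symm (0, σ))`
-- is `21 ⊕ σ`.
theorem isDirectSumOf1And21_decomposeFin_symm_zero_iff (σ : Perm (Fin n)) :
    IsDirectSumOf1And21 (decomposeFin.symm (0, σ)) ↔ IsDirectSumOf1And21 σ := by
  simp [IsDirectSumOf1And21, Fin.forall_fin_succ, decomposeFin_symm_apply_zero,
    decomposeFin_symm_apply_succ]

theorem isDirectSumOf1And21_decomposeFin_symm_one_zero_iff (σ : Perm (Fin n)) :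
    IsDirectSumOf1And21 (decomposeFin.symm (1, decomposeFin.symm (0, σ))) ↔
      IsDirectSumOf1And21 σ := by
  simp [IsDirectSumOf1And21, Fin.forall_fin_succ, decomposeFin_symm_apply_zero,
    decomposeFin_symm_apply_succ, swap_apply_of_ne_of_ne, Fin.succ_succ_ne_one]

theorem IsDirectSumOf1And21.apply_zero_eq_zero_or_one {π : Perm (Fin (n + 2))}
    (h : IsDirectSumOf1And21 π) : π 0 = 0 ∨ π 0 = 1 := by
  rcases (h 0).2 with h0 | h0 | h0
  · exact .inl (Fin.ext h0)
  · exact .inr (Fin.ext h0)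
  · simp at h0

theorem IsDirectSumOf1And21.apply_zero_of_decomposeFin_symm_one {σ : Perm (Fin (n + 1))}
    (h : IsDirectSumOf1And21 (decomposeFin.symm (1, σ))) : σ 0 = 0 := by
  have h1 := (h 0).1
  rw [decomposeFin_symm_apply_zero, decomposeFin_symm_apply_one, swap_apply_eq_iff,
    swap_apply_left, ← Fin.succ_zero_eq_one, Fin.succ_inj] at h1
  exact h1

theorem Equiv.Perm.decomposeFin_fst (π : Perm (Fin (n + 1))) : (decomposeFin π).1 = π 0 := by
  simp [decomposeFin]

theorem Equiv.Perm.decomposeFin_symm_snd_of_apply_zero {π : Perm (Fin (n + 1))} {p : Fin (n + 1)}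
    (hp : π 0 = p) : decomposeFin.symm (p, (decomposeFin π).2) = π := by
  rw [← hp, ← decomposeFin_fst, Prod.mk.eta, symm_apply_apply]

def Equiv.Perm.subtypeApplyZeroEquiv (R : Perm (Fin (n + 1)) → Prop) (p : Fin (n + 1)) :
    {π // R π ∧ π 0 = p} ≃ {σ : Perm (Fin n) // R (decomposeFin.symm (p, σ))} where
  toFun π := ⟨(decomposeFin π.1).2, by
    rw [decomposeFin_symm_snd_of_apply_zero π.2.2]; exact π.2.1⟩
  invFun σ := ⟨decomposeFin.symm (p, σ), σ.2, decomposeFin_symm_apply_zero p σ⟩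
  left_inv π := Subtype.ext (decomposeFin_symm_snd_of_apply_zero π.2.2)
  right_inv σ := Subtype.ext (by simp)

theorem card_isDirectSumOf1And21_add_two :
    Nat.card {π : Perm (Fin (n + 2)) // IsDirectSumOf1And21 π} =
      Nat.card {π : Perm (Fin (n + 1)) // IsDirectSumOf1And21 π} +
        Nat.card {π : Perm (Fin n) // IsDirectSumOf1And21 π} := by
  classical
  have hsplit (π : Perm (Fin (n + 2))) : IsDirectSumOf1And21 π ↔
      (IsDirectSumOf1And21 π ∧ π 0 = 0) ∨ (IsDirectSumOf1And21 π ∧ π 0 = 1) :=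
    ⟨fun h => h.apply_zero_eq_zero_or_one.imp (⟨h, ·⟩) (⟨h, ·⟩), fun h => h.elim And.left And.left⟩
  have hdisj : Disjoint (fun π : Perm (Fin (n + 2)) => IsDirectSumOf1And21 π ∧ π 0 = 0)
      (fun π => IsDirectSumOf1And21 π ∧ π 0 = 1) := by
    simp only [Pi.disjoint_iff, Prop.disjoint_iff]
    rintro π ⟨⟨-, h0⟩, -, h1⟩
    exact zero_ne_one (h0.symm.trans h1)
  have hfix_zero (σ : Perm (Fin (n + 1))) : IsDirectSumOf1And21 (decomposeFin.symm (1, σ)) ↔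
      IsDirectSumOf1And21 (decomposeFin.symm (1, σ)) ∧ σ 0 = 0 :=
    ⟨fun h => ⟨h, h.apply_zero_of_decomposeFin_symm_one⟩, And.left⟩
  rw [Nat.card_congr ((subtypeEquivRight hsplit).trans (subtypeOrEquiv _ _ hdisj)), Nat.card_sum,
    Nat.card_congr (Perm.subtypeApplyZeroEquiv _ 0),
    Nat.card_congr (Perm.subtypeApplyZeroEquiv _ 1),
    Nat.card_congr (subtypeEquivRight hfix_zero), Nat.card_congr (Perm.subtypeApplyZeroEquiv _ 0)]
  simp only [isDirectSumOf1And21_decomposeFin_symm_zero_iff,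
    isDirectSumOf1And21_decomposeFin_symm_one_zero_iff]

theorem card_isDirectSumOf1And21 (n : ℕ) :
    Nat.card {π : Perm (Fin n) // IsDirectSumOf1And21 π} = Nat.fib (n + 1) := by
  induction n using Nat.twoStepInduction with
  | zero => exact Nat.card_eq_one_iff_unique.2 ⟨inferInstance, ⟨1, fun i => i.elim0⟩⟩
  | one => exact Nat.card_eq_one_iff_unique.2 ⟨inferInstance, ⟨1, fun i => by simp⟩⟩
  | more n ih₀ ih₁ =>
    rw [card_isDirectSumOf1And21_add_two, ih₀, ih₁, Nat.fib_add_two (n := n + 1), add_comm]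

end Counting

/-- `π ∈ Av(231,312,321)` iff `π` is a direct sum of copies of `1` and `21`;
consequently `|Av_n(231,312,321)| = F_n` (Fibonacci with `F_0 = F_1 = 1`). -/
theorem stmt9 :
    (∀ (n : ℕ) (π : Equiv.Perm (Fin n)),
      (Avoids231 π ∧ Avoids312 π ∧ Avoids321 π) ↔ IsDirectSumOf1And21 π) ∧
    (∀ n : ℕ,
      Nat.card {π : Equiv.Perm (Fin n) // Avoids231 π ∧ Avoids312 π ∧ Avoids321 π}
        = Nat.fib (n + 1)) := by
  refine ⟨avoids231_and_avoids312_and_avoids321_iff_isDirectSumOf1And21, fun n => ?_⟩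
  rw [Nat.card_congr (subtypeEquivRight
    (avoids231_and_avoids312_and_avoids321_iff_isDirectSumOf1And21 n)), card_isDirectSumOf1And21]
end

section
/- The unique formal power series solution (s, w_p, w_n, r_p, r_n) of the system s = 1 + xs + x·w_n·s, w_p = 1 + x·w_p + x·w_n·w_p + x·r_n·w_p, w_n = x·w_p + x·w_n·w_p + x·r_n·w_p, r_p = 1 + x·r_p + x·w_n·r_p, r_n = x·r_p + x·w_n·r_p has the property that s satisfies 1 + (x−1)s − x·s² + x·s³ = 0. -/
/-!
Subtracting equations shows `w_n = w_p - 1` and `r_n = r_p - 1`, after which both `s` and `r_p`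
solve `(1 - x w_p) y = 1`; as `1 - x w_p` is a unit of `ℚ⟦x⟧`, `s = r_p = (1 - x w_p)⁻¹`. The
equation for `w_p` then becomes `w_p = s + x w_p² - x w_p`, and multiplying it by `x s²` and
substituting `x w_p s = s - 1` eliminates `w_p`, leaving the cubic for `s`.
-/

namespace PowerSeries

theorem isUnit_one_sub_X_mul {R : Type*} [CommRing R] (f : R⟦X⟧) : IsUnit (1 - X * f) :=
  isUnit_iff_constantCoeff.mpr (by simp)

end PowerSeries

open PowerSeries in
/-- The unique formal power series solution of the context-free-grammar system for the
`F⊖`-machine has the property that `s` satisfies `1 + (x−1)s − x·s² + x·s³ = 0`. -/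
theorem stmt13 (s wp wn rp rn : PowerSeries ℚ)
    (hs : s = 1 + X * s + X * wn * s)
    (hwp : wp = 1 + X * wp + X * wn * wp + X * rn * wp)
    (hwn : wn = X * wp + X * wn * wp + X * rn * wp)
    (hrp : rp = 1 + X * rp + X * wn * rp)
    (hrn : rn = X * rp + X * wn * rp) :
    1 + (X - 1) * s - X * s ^ 2 + X * s ^ 3 = (0 : PowerSeries ℚ) := by
  have hwn' : wn = wp - 1 := by linear_combination hwn - hwp
  have hrn' : rn = rp - 1 := by linear_combination hrn - hrp
  have hs' : (1 - X * wp) * s = 1 := by linear_combination hs + X * s * hwn'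
  have hrp' : (1 - X * wp) * rp = 1 := by linear_combination hrp + X * rp * hwn'
  have hs_eq_rp : s = rp := (isUnit_one_sub_X_mul wp).mul_left_cancel (hs'.trans hrp'.symm)
  have hwp' : wp = s + X * wp ^ 2 - X * wp := by
    linear_combination hwp + X * wp * hwn' + X * wp * hrn' - X * wp * hs_eq_rp - hs'
  linear_combination (X * wp * s - 1 - X * s) * hs' - X * s ^ 2 * hwp'
end

section
/- For every permutation class C and every permutation π generated by the C-machine, there is a unique generation sequence producing π that satisfies the conventions (U1) pop whenever possible and (U2) every left-to-right maximum bypasses the container. -/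
/-!
Fix a run of the machine that ends by outputting `π`. Each of its states is pinned down by the
number `k` of entries already output and the next input `m`: the output is `π 0, …, π (k-1)` and
the container holds the entries of `π k, …, π (n-1)` below `m`, in the order of `π`. So the
canonical step is forced. If `π k < m`, then `π k` heads the container and (U1) forces a pop.
If `π k = m`, then `m` is a left-to-right maximum, so (U2) forbids pushing it and it must be
bypassed. If `π k > m`, then `m` must be pushed, at the unique position keeping the container
in `π`-order. This proves uniqueness. It also proves existence: the container after such a push
is a subsequence of the container right after `m` was pushed in any generation sequence of `π`,
and `C` is closed under patterns.
-/

/-- The permutation `σ` contains the permutation `τ` as a pattern. -/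
def PermContains (σ τ : Σ n : ℕ, Equiv.Perm (Fin n)) : Prop :=
  ∃ f : Fin τ.1 → Fin σ.1, StrictMono f ∧
    ∀ a b, τ.2 a < τ.2 b ↔ σ.2 (f a) < σ.2 (f b)

/-- A permutation class: a set of permutations closed downward under pattern containment. -/
def IsPermClass (C : Set (Σ n : ℕ, Equiv.Perm (Fin n))) : Prop :=
  ∀ σ ∈ C, ∀ τ, PermContains σ τ → τ ∈ C

/-- An operation of a `C`-machine: bypass, push (at a given position in the
container), or pop (the leftmost container entry). -/
inductive MOp where
  | bypass : MOp
  | push : ℕ → MOp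
  | pop : MOp

/-- A state of a `C`-machine generating a permutation from the input `0,1,…,n−1`:
the next input symbol, the container contents (left to right), and the output so far. -/
structure MState where
  next : ℕ
  container : List ℕ
  output : List ℕ

/-- A single step of the machine with container constraint `P` and input length `n`. -/
inductive MStep (P : List ℕ → Prop) (n : ℕ) : MState → MOp → MState → Prop
  | bypass (s : MState) (h : s.next < n) :
      MStep P n s .bypass ⟨s.next + 1, s.container, s.output ++ [s.next]⟩
  | push (s : MState) (pos : ℕ) (h : s.next < n) (hpos : pos ≤ s.container.length)
      (hP : P (s.container.insertIdx pos s.next)) :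
      MStep P n s (.push pos) ⟨s.next + 1, s.container.insertIdx pos s.next, s.output⟩
  | pop (s : MState) (a : ℕ) (rest : List ℕ) (h : s.container = a :: rest) :
      MStep P n s .pop ⟨s.next, rest, s.output ++ [a]⟩

/-- A run of the machine in which every step additionally satisfies `Q`. -/
inductive MRun (P : List ℕ → Prop) (n : ℕ) (Q : MState → MOp → Prop) :
    MState → List MOp → MState → Prop
  | nil (s : MState) : MRun P n Q s [] s
  | cons {s s' s'' : MState} {op : MOp} {ops : List MOp} :
      MStep P n s op s' → Q s op → MRun P n Q s' ops s'' → MRun P n Q s (op :: ops) s''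

/-- The operation sequence `ops` (with every step satisfying `Q`) generates the
permutation `π` from the input `0,1,…,n−1`. -/
def Generates (P : List ℕ → Prop) {n : ℕ} (π : Equiv.Perm (Fin n))
    (Q : MState → MOp → Prop) (ops : List MOp) : Prop :=
  MRun P n Q ⟨0, [], []⟩ ops ⟨n, [], List.ofFn fun i => (π i : ℕ)⟩

/-- The container constraint of the `C`-machine: the container contents must be
order isomorphic to a member of the class `C`. -/
def ClassConstraint (C : Set (Σ n : ℕ, Equiv.Perm (Fin n))) (L : List ℕ) : Prop :=
  ∃ σ : Equiv.Perm (Fin L.length),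
    (⟨L.length, σ⟩ : Σ n : ℕ, Equiv.Perm (Fin n)) ∈ C ∧
    ∀ a b : Fin L.length, σ a < σ b ↔ L.get a < L.get b

/-- `v` is the value of a left-to-right maximum of `π`. -/
def IsLRMaxValue {n : ℕ} (π : Equiv.Perm (Fin n)) (v : ℕ) : Prop :=
  ∃ j : Fin n, (π j : ℕ) = v ∧ ∀ i < j, π i < π j

/-- The uniqueness conventions for generating `π`: (U1) pop whenever possible
(i.e. whenever the leftmost container entry is the next entry of `π` to be output),
and (U2) left-to-right maxima bypass the container (are never pushed). -/
def Canonical {n : ℕ} (π : Equiv.Perm (Fin n)) (s : MState) (op : MOp) : Prop :=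
  (∀ h : s.output.length < n,
      s.container.head? = some (π ⟨s.output.length, h⟩ : ℕ) → op = MOp.pop) ∧
  (∀ pos, op = MOp.push pos → ¬ IsLRMaxValue π s.next)

namespace List

variable {α : Type*}

theorem insertIdx_eq_take_append_cons_drop (a : α) :
    ∀ {L : List α} {p : ℕ}, p ≤ L.length → L.insertIdx p a = L.take p ++ a :: L.drop p
  | _, 0, _ => rfl
  | [], _ + 1, h => by simp at h
  | _ :: L, p + 1, h => by
    simp [insertIdx_succ_cons, insertIdx_eq_take_append_cons_drop a (L := L) (p := p)
      (by simpa using h)]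

theorem insertIdx_append_length (A B : List α) (a : α) :
    (A ++ B).insertIdx A.length a = A ++ a :: B := by
  simp [insertIdx_eq_take_append_cons_drop]

theorem idxOf_insertIdx_self [BEq α] [LawfulBEq α] {a : α} {L : List α} (ha : a ∉ L) {p : ℕ}
    (hp : p ≤ L.length) : (L.insertIdx p a).idxOf a = p := by
  rw [insertIdx_eq_take_append_cons_drop a hp,
    idxOf_append_of_notMem fun h => ha (mem_of_mem_take h)]
  simp [hp]

theorem insertIdx_inj_of_notMem [DecidableEq α] {a : α} {L : List α} (ha : a ∉ L) {p q : ℕ}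
    (hp : p ≤ L.length) (hq : q ≤ L.length) : L.insertIdx p a = L.insertIdx q a ↔ p = q :=
  ⟨fun h => by rw [← idxOf_insertIdx_self ha hp, h, idxOf_insertIdx_self ha hq], fun h => h ▸ rfl⟩

theorem filter_lt_insertIdx {m : ℕ} {L : List ℕ} (hL : ∀ v ∈ L, v < m) {p : ℕ}
    (hp : p ≤ L.length) : (L.insertIdx p m).filter (· < m) = L := by
  have hL' : ∀ v ∈ L, decide (v < m) = true := fun v hv => by simpa using hL v hv
  rw [insertIdx_eq_take_append_cons_drop m hp, filter_append, filter_cons_of_neg (by simp),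
    filter_eq_self.2 fun v hv => hL' v (mem_of_mem_take hv),
    filter_eq_self.2 fun v hv => hL' v (mem_of_mem_drop hv), take_append_drop]

theorem filter_lt_succ_of_notMem {m : ℕ} {L : List ℕ} (hm : m ∉ L) :
    L.filter (· < m + 1) = L.filter (· < m) :=
  filter_congr fun v hv => by
    have : v ≠ m := ne_of_mem_of_not_mem hv hm
    simp only [decide_eq_decide]
    omega

theorem exists_insertIdx_filter_lt {m : ℕ} {D : List ℕ} (hm : m ∈ D) (hD : D.Nodup) :
    ∃ p ≤ (D.filter (· < m)).length,
      (D.filter (· < m)).insertIdx p m = D.filter (· < m + 1) := by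
  obtain ⟨A, B, rfl⟩ := append_of_mem hm
  have hmAB : m ∉ A ++ B := (nodup_cons.1 (nodup_middle.1 hD)).1
  rw [mem_append, not_or] at hmAB
  refine ⟨(A.filter (· < m)).length, by simp, ?_⟩
  rw [filter_append, filter_append, filter_cons_of_neg (by simp),
    filter_cons_of_pos (by simp), insertIdx_append_length,
    filter_lt_succ_of_notMem hmAB.1, filter_lt_succ_of_notMem hmAB.2]

end List

theorem exists_perm_lt_iff_lt_of_injective {α : Type*} [LinearOrder α] {m : ℕ} {g : Fin m → α}
    (hg : Function.Injective g) : ∃ σ : Equiv.Perm (Fin m), ∀ a b, σ a < σ b ↔ g a < g b := by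
  have hmono : StrictMono (g ∘ Tuple.sort g) :=
    (Tuple.monotone_sort g).strictMono_of_injective (hg.comp (Tuple.sort g).injective)
  refine ⟨(Tuple.sort g).symm, fun a b => ?_⟩
  simpa using hmono.lt_iff_lt (a := (Tuple.sort g).symm a) (b := (Tuple.sort g).symm b) |>.symm

theorem ClassConstraint.injective_get {C : Set (Σ n : ℕ, Equiv.Perm (Fin n))} {L : List ℕ}
    (h : ClassConstraint C L) : Function.Injective L.get := by
  obtain ⟨σ, -, hσ⟩ := h
  intro a b hab
  refine σ.injective (le_antisymm ?_ ?_) <;> refine not_lt.1 fun hlt => ?_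
  · exact (hσ b a).1 hlt |>.ne hab.symm
  · exact (hσ a b).1 hlt |>.ne hab

theorem ClassConstraint.of_sublist {C : Set (Σ n : ℕ, Equiv.Perm (Fin n))} (hC : IsPermClass C)
    {L L' : List ℕ} (h : ClassConstraint C L) (hs : L'.Sublist L) : ClassConstraint C L' := by
  obtain ⟨f, hf⟩ := List.sublist_iff_exists_fin_orderEmbedding_get_eq.1 hs
  have hinj : Function.Injective L'.get := by
    intro a b hab
    rw [hf, hf] at hab
    exact f.injective (h.injective_get hab)
  obtain ⟨σ', hσ'⟩ := exists_perm_lt_iff_lt_of_injective hinj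
  obtain ⟨σ, hσC, hσ⟩ := h
  refine ⟨σ', hC _ hσC _ ⟨f, f.strictMono, fun a b => ?_⟩, hσ'⟩
  rw [hσ' a b, hσ (f a) (f b), hf, hf]

section Machine

variable {n : ℕ} (π : Equiv.Perm (Fin n))

def permList : List ℕ := List.ofFn fun i => (π i : ℕ)

@[simp]
theorem length_permList : (permList π).length = n := List.length_ofFn

@[simp]
theorem getElem_permList {k : ℕ} (hk : k < (permList π).length) :
    (permList π)[k] = (π ⟨k, by simpa using hk⟩ : ℕ) :=
  List.getElem_ofFn hk

theorem nodup_permList : (permList π).Nodup :=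
  List.nodup_ofFn.2 fun _ _ h => π.injective (Fin.val_injective h)

theorem mem_permList {v : ℕ} : v ∈ permList π ↔ v < n := by
  simp only [permList, List.mem_ofFn]
  exact ⟨fun ⟨i, hi⟩ => hi ▸ (π i).isLt, fun hv => ⟨π.symm ⟨v, hv⟩, by simp⟩⟩

theorem take_permList_succ {k : ℕ} (hk : k < n) :
    (permList π).take (k + 1) = (permList π).take k ++ [(π ⟨k, hk⟩ : ℕ)] := by
  simp [List.take_add_one, hk]

theorem drop_permList {k : ℕ} (hk : k < n) :
    (permList π).drop k = (π ⟨k, hk⟩ : ℕ) :: (permList π).drop (k + 1) := by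
  simp [List.drop_eq_getElem_cons (show k < (permList π).length by simpa)]

theorem notMem_drop_succ_permList {k : ℕ} (hk : k < n) :
    (π ⟨k, hk⟩ : ℕ) ∉ (permList π).drop (k + 1) := by
  have := (nodup_permList π).sublist (List.drop_sublist k _)
  rw [drop_permList π hk] at this
  exact (List.nodup_cons.1 this).1

theorem append_singleton_eq_take_permList {o : List ℕ} {a : ℕ}
    (h : o ++ [a] = (permList π).take (o ++ [a]).length) :
    ∃ hk : o.length < n, o = (permList π).take o.length ∧ a = π ⟨o.length, hk⟩ := by
  have hk : o.length < n := by
    have := congrArg List.length h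
    simp only [List.length_append, List.length_singleton, List.length_take,
      length_permList] at this
    omega
  rw [List.length_append, List.length_singleton, take_permList_succ π hk] at h
  simpa [hk] using h

def finalState : MState := ⟨n, [], permList π⟩

theorem not_mStep_finalState {P : List ℕ → Prop} {op : MOp} {s : MState} :
    ¬ MStep P n (finalState π) op s := by
  intro h
  cases h with
  | bypass h | push _ h => exact lt_irrefl n h
  | pop _ _ h => simp [finalState] at h

structure EntriesRead (s : MState) : Prop where
  container_lt : ∀ v ∈ s.container, v < s.next
  output_lt : ∀ v ∈ s.output, v < s.next

theorem entriesRead_init : EntriesRead ⟨0, [], []⟩ := ⟨by simp, by simp⟩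

theorem EntriesRead.next_notMem_container {s : MState} (hr : EntriesRead s) :
    s.next ∉ s.container :=
  fun h => lt_irrefl _ (hr.container_lt _ h)

theorem EntriesRead.head?_ne {s : MState} (hr : EntriesRead s) {v : ℕ} (hv : s.next ≤ v) :
    s.container.head? ≠ some v := by
  intro h
  have := hr.container_lt v (List.mem_of_head? h)
  omega

theorem MStep.entriesRead {P : List ℕ → Prop} {s s' : MState} {op : MOp}
    (h : MStep P n s op s') (hr : EntriesRead s) : EntriesRead s' := by
  obtain ⟨hc, ho⟩ := hr
  cases h with
  | bypass =>
    refine ⟨fun v hv => (hc v hv).trans (Nat.lt_succ_self _), fun v hv => ?_⟩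
    rcases List.mem_append.1 hv with hv | hv
    · exact (ho v hv).trans (Nat.lt_succ_self _)
    · rw [List.mem_singleton.1 hv]
      exact Nat.lt_succ_self _
  | push pos _ hpos =>
    refine ⟨fun v hv => ?_, fun v hv => (ho v hv).trans (Nat.lt_succ_self _)⟩
    rcases (List.mem_insertIdx hpos).1 hv with rfl | hv
    · exact Nat.lt_succ_self _
    · exact (hc v hv).trans (Nat.lt_succ_self _)
  | pop a rest h =>
    rw [h] at hc
    refine ⟨fun v hv => hc v (List.mem_cons_of_mem a hv), fun v hv => ?_⟩
    rcases List.mem_append.1 hv with hv | hv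
    · exact ho v hv
    · exact List.mem_singleton.1 hv ▸ hc a List.mem_cons_self

theorem MRun.entriesRead {P : List ℕ → Prop} {Q : MState → MOp → Prop} {s t : MState}
    {ops : List MOp} (h : MRun P n Q s ops t) (hr : EntriesRead s) : EntriesRead t := by
  induction h with
  | nil => exact hr
  | cons hstep _ _ ih => exact ih (hstep.entriesRead hr)

structure Consistent (s : MState) : Prop where
  next_le : s.next ≤ n
  output_eq : s.output = (permList π).take s.output.length
  container_eq : s.container = ((permList π).drop s.output.length).filter (· < s.next)

theorem consistent_init : Consistent π ⟨0, [], []⟩ := ⟨Nat.zero_le n, by simp, by simp⟩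

theorem consistent_finalState : Consistent π (finalState π) :=
  ⟨le_rfl, by simp [finalState], by simp [finalState, List.drop_eq_nil_of_le]⟩

variable {π}

theorem Consistent.output_length_le {s : MState} (hs : Consistent π s) : s.output.length ≤ n := by
  have := congrArg List.length hs.output_eq
  simp only [List.length_take, length_permList] at this
  omega

theorem Consistent.val_lt_next {s : MState} (hs : Consistent π s) (hr : EntriesRead s)
    {i : Fin n} (hi : (i : ℕ) < s.output.length) : (π i : ℕ) < s.next := by
  refine hr.output_lt _ ?_
  rw [hs.output_eq, List.mem_take_iff_getElem]
  exact ⟨i, by simp [hi], by simp⟩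

theorem Consistent.of_mStep {P : List ℕ → Prop} {s s' : MState} {op : MOp}
    (h : MStep P n s op s') (hr : EntriesRead s) (hs' : Consistent π s') : Consistent π s := by
  cases h with
  | bypass =>
    obtain ⟨hnext, hout, hcont⟩ := hs'
    dsimp only at hnext hout hcont
    obtain ⟨hk, hprefix, hm⟩ := append_singleton_eq_take_permList π hout
    refine ⟨by omega, hprefix, ?_⟩
    rw [List.length_append, List.length_singleton, hm,
      List.filter_lt_succ_of_notMem (notMem_drop_succ_permList π hk)] at hcont
    rw [hcont, drop_permList π hk, List.filter_cons_of_neg (by simp [hm]), hm]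
  | push pos _ hpos =>
    obtain ⟨hnext, hout, hcont⟩ := hs'
    dsimp only at hnext hout hcont
    refine ⟨by omega, hout, ?_⟩
    rw [← List.filter_lt_insertIdx hr.container_lt hpos, hcont, List.filter_filter]
    exact List.filter_congr fun v _ => by grind
  | pop a rest h =>
    obtain ⟨hnext, hout, hcont⟩ := hs'
    dsimp only at hnext hout hcont
    obtain ⟨hk, hprefix, rfl⟩ := append_singleton_eq_take_permList π hout
    have ha : (π ⟨s.output.length, hk⟩ : ℕ) < s.next := hr.container_lt _ (by simp [h])
    refine ⟨hnext, hprefix, ?_⟩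
    rw [List.length_append, List.length_singleton] at hcont
    rw [h, hcont, drop_permList π hk, List.filter_cons_of_pos (by simpa using ha)]

theorem MRun.consistent {P : List ℕ → Prop} {Q : MState → MOp → Prop} {s t : MState}
    {ops : List MOp} (h : MRun P n Q s ops t) (hr : EntriesRead s) (ht : Consistent π t) :
    Consistent π s := by
  induction h with
  | nil => exact ht
  | cons hstep _ _ ih => exact .of_mStep hstep hr (ih (hstep.entriesRead hr) ht)

theorem Consistent.isLRMaxValue_next {s : MState} (hs : Consistent π s) (hr : EntriesRead s)
    (hk : s.output.length < n) (h : (π ⟨s.output.length, hk⟩ : ℕ) = s.next) :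
    IsLRMaxValue π s.next :=
  ⟨_, h, fun i hi => by have := hs.val_lt_next hr hi; rw [Fin.lt_def]; omega⟩

theorem Consistent.not_isLRMaxValue_next {s : MState} (hs : Consistent π s) (hr : EntriesRead s)
    (hk : s.output.length < n) (h : s.next < (π ⟨s.output.length, hk⟩ : ℕ)) :
    ¬ IsLRMaxValue π s.next := by
  rintro ⟨j, hj, hmax⟩
  rcases lt_trichotomy (j : ℕ) s.output.length with hjk | hjk | hjk
  · exact (hs.val_lt_next hr hjk).ne hj
  · obtain rfl : j = ⟨s.output.length, hk⟩ := Fin.ext hjk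
    exact h.ne' hj
  · have := hmax ⟨_, hk⟩ hjk
    rw [Fin.lt_def] at this
    omega

theorem MStep.right_unique {P : List ℕ → Prop} {s s₁ s₂ : MState} {op : MOp}
    (h₁ : MStep P n s op s₁) (h₂ : MStep P n s op s₂) : s₁ = s₂ := by
  cases h₁ with
  | pop a rest h =>
    cases h₂ with
    | pop a' rest' h' =>
      obtain ⟨rfl, rfl⟩ := List.cons.inj (h.symm.trans h')
      rfl
  | _ => cases h₂; rfl

theorem MStep.exists_head?_eq_of_pop {P : List ℕ → Prop} {s s' : MState}
    (h : MStep P n s .pop s') (hs' : Consistent π s') :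
    ∃ hk : s.output.length < n, s.container.head? = some (π ⟨s.output.length, hk⟩ : ℕ) := by
  cases h with
  | pop a rest h =>
    obtain ⟨hk, -, rfl⟩ := append_singleton_eq_take_permList π hs'.output_eq
    exact ⟨hk, by simp [h]⟩

theorem MStep.exists_eq_next_of_bypass {P : List ℕ → Prop} {s s' : MState}
    (h : MStep P n s .bypass s') (hs' : Consistent π s') :
    ∃ hk : s.output.length < n, (π ⟨s.output.length, hk⟩ : ℕ) = s.next := by
  cases h with
  | bypass =>
    obtain ⟨hk, -, hm⟩ := append_singleton_eq_take_permList π hs'.output_eq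
    exact ⟨hk, hm.symm⟩

theorem MStep.insertIdx_eq_of_push {P : List ℕ → Prop} {s s' : MState} {pos : ℕ}
    (h : MStep P n s (.push pos) s') (hs' : Consistent π s') :
    pos ≤ s.container.length ∧ s.container.insertIdx pos s.next =
      ((permList π).drop s.output.length).filter (· < s.next + 1) := by
  cases h with
  | push _ _ hpos => exact ⟨hpos, hs'.container_eq⟩

theorem canonical_op_unique {P : List ℕ → Prop} {s s₁ s₂ : MState} {op₁ op₂ : MOp}
    (hs : Consistent π s) (hr : EntriesRead s)
    (h₁ : MStep P n s op₁ s₁) (c₁ : Canonical π s op₁) (hs₁ : Consistent π s₁)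
    (h₂ : MStep P n s op₂ s₂) (c₂ : Canonical π s op₂) (hs₂ : Consistent π s₂) :
    op₁ = op₂ := by
  by_cases hhead : ∃ hk : s.output.length < n,
      s.container.head? = some (π ⟨s.output.length, hk⟩ : ℕ)
  · obtain ⟨hk, hh⟩ := hhead
    rw [c₁.1 hk hh, c₂.1 hk hh]
  have not_pop {op : MOp} {s' : MState} (h : MStep P n s op s') (hs' : Consistent π s') :
      op ≠ .pop := by
    rintro rfl
    exact hhead (h.exists_head?_eq_of_pop hs')
  have not_push_of_bypass {op : MOp} {s' : MState} (h : MStep P n s .bypass s')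
      (hs' : Consistent π s') (c : Canonical π s op) (pos : ℕ) : op ≠ .push pos := by
    rintro rfl
    obtain ⟨hk, hm⟩ := h.exists_eq_next_of_bypass hs'
    exact c.2 pos rfl (hs.isLRMaxValue_next hr hk hm)
  cases op₁ <;> cases op₂
  case bypass.bypass => rfl
  case push.push p q =>
    obtain ⟨hp, hins₁⟩ := h₁.insertIdx_eq_of_push hs₁
    obtain ⟨hq, hins₂⟩ := h₂.insertIdx_eq_of_push hs₂
    rw [(List.insertIdx_inj_of_notMem hr.next_notMem_container hp hq).1
      (hins₁.trans hins₂.symm)]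
  case bypass.push q => exact (not_push_of_bypass h₁ hs₁ c₂ q rfl).elim
  case push.bypass p => exact (not_push_of_bypass h₂ hs₂ c₁ p rfl).elim
  all_goals first | exact (not_pop h₁ hs₁ rfl).elim | exact (not_pop h₂ hs₂ rfl).elim

theorem canonical_run_unique {P : List ℕ → Prop} {s : MState} {ops₁ ops₂ : List MOp}
    (hs : Consistent π s) (hr : EntriesRead s)
    (h₁ : MRun P n (Canonical π) s ops₁ (finalState π))
    (h₂ : MRun P n (Canonical π) s ops₂ (finalState π)) : ops₁ = ops₂ := by
  induction ops₁ generalizing s ops₂ with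
  | nil =>
    cases h₁
    cases h₂ with
    | nil => rfl
    | cons h => exact (not_mStep_finalState π h).elim
  | cons op₁ ops₁ ih =>
    rcases h₁ with _ | ⟨st₁, c₁, r₁⟩
    rcases h₂ with _ | ⟨st₂, c₂, r₂⟩
    · exact (not_mStep_finalState π st₁).elim
    have hs₁ := r₁.consistent (st₁.entriesRead hr) (consistent_finalState π)
    have hs₂ := r₂.consistent (st₂.entriesRead hr) (consistent_finalState π)
    obtain rfl := canonical_op_unique hs hr st₁ c₁ hs₁ st₂ c₂ hs₂
    obtain rfl := st₁.right_unique st₂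
    rw [ih hs₁ (st₁.entriesRead hr) r₁ r₂]

theorem MStep.next_add_length_lt {P : List ℕ → Prop} {s s' : MState} {op : MOp}
    (h : MStep P n s op s') : s.next + s.output.length < s'.next + s'.output.length := by
  cases h <;> simp only [List.length_append, List.length_singleton] <;> omega

theorem MRun.exists_mStep_of_next_le {P : List ℕ → Prop} {Q : MState → MOp → Prop}
    {s t : MState} {ops : List MOp} (h : MRun P n Q s ops t) {m : ℕ} (hs : s.next ≤ m)
    (ht : m < t.next) :
    ∃ s₁ op s₂, (∃ ops₁, MRun P n Q s ops₁ s₁) ∧ MStep P n s₁ op s₂ ∧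
      (∃ ops₂, MRun P n Q s₂ ops₂ t) ∧ s₁.next = m ∧ s₂.next = m + 1 := by
  induction h with
  | nil => omega
  | @cons s s' _ op _ hstep hQ hrun ih =>
    by_cases hs' : s'.next ≤ m
    · obtain ⟨s₁, op₁, s₂, ⟨ops₁, hr₁⟩, hst, hr₂, hn₁, hn₂⟩ := ih hs' ht
      exact ⟨s₁, op₁, s₂, ⟨op :: ops₁, .cons hstep hQ hr₁⟩, hst, hr₂, hn₁, hn₂⟩
    · have : s'.next ≤ s.next + 1 := by cases hstep <;> simp
      exact ⟨s, op, s', ⟨[], .nil s⟩, hstep, ⟨_, hrun⟩, by omega, by omega⟩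

theorem classConstraint_filter_drop_of_mRun {C : Set (Σ n : ℕ, Equiv.Perm (Fin n))}
    (hC : IsPermClass C) {Q : MState → MOp → Prop} {ops : List MOp}
    (h : MRun (ClassConstraint C) n Q ⟨0, [], []⟩ ops (finalState π)) {k m : ℕ} (hk : k < n)
    (hprev : ∀ i : Fin n, (i : ℕ) < k → (π i : ℕ) < m) (hm : m < π ⟨k, hk⟩) :
    ClassConstraint C (((permList π).drop k).filter (· < m + 1)) := by
  obtain ⟨s₁, op, s₂, ⟨_, r₁⟩, st, ⟨_, r₂⟩, rfl, hn₂⟩ :=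
    h.exists_mStep_of_next_le (Nat.zero_le m) (by simp only [finalState]; omega)
  have hr₁ := r₁.entriesRead entriesRead_init
  have hs₂ := r₂.consistent (st.entriesRead hr₁) (consistent_finalState π)
  have hs₁ := Consistent.of_mStep st hr₁ hs₂
  have hk₁ : s₁.output.length ≤ k := by
    by_contra hlt
    have := hs₁.val_lt_next hr₁ (i := ⟨k, hk⟩) (by simp only; omega)
    omega
  cases op with
  | pop => cases st; simp at hn₂
  | bypass =>
    obtain ⟨hk₁', hm₁⟩ := st.exists_eq_next_of_bypass hs₂
    rcases hk₁.lt_or_eq with hlt | rfl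
    · have := hprev ⟨_, hk₁'⟩ hlt
      omega
    · omega
  | push pos =>
    obtain ⟨-, hins⟩ := st.insertIdx_eq_of_push hs₂
    cases st with
    | push _ _ _ hP =>
      rw [hins] at hP
      exact hP.of_sublist hC ((List.drop_sublist_drop_left _ hk₁).filter _)

theorem Consistent.exists_canonical_pop {P : List ℕ → Prop} {s : MState} (hs : Consistent π s)
    (hk : s.output.length < n) (hlt : (π ⟨s.output.length, hk⟩ : ℕ) < s.next) :
    ∃ s', MStep P n s .pop s' ∧ Canonical π s .pop ∧ Consistent π s' := by
  have hcont : s.container = (π ⟨s.output.length, hk⟩ : ℕ) ::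
      ((permList π).drop (s.output.length + 1)).filter (· < s.next) := by
    rw [hs.container_eq, drop_permList π hk, List.filter_cons_of_pos (by simpa using hlt)]
  refine ⟨_, .pop s _ _ hcont, ⟨fun _ _ => rfl, fun _ h => nomatch h⟩, hs.next_le, ?_, ?_⟩
  · simp [take_permList_succ π hk, ← hs.output_eq]
  · simp

theorem Consistent.exists_canonical_bypass {P : List ℕ → Prop} {s : MState}
    (hs : Consistent π s) (hr : EntriesRead s) (hk : s.output.length < n)
    (heq : (π ⟨s.output.length, hk⟩ : ℕ) = s.next) :
    ∃ s', MStep P n s .bypass s' ∧ Canonical π s .bypass ∧ Consistent π s' := by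
  have hnext : s.next < n := heq ▸ (π _).isLt
  refine ⟨_, .bypass s hnext, ⟨fun _ h => (hr.head?_ne heq.ge h).elim, fun _ h => nomatch h⟩,
    hnext, ?_, ?_⟩
  · simp [take_permList_succ π hk, heq, ← hs.output_eq]
  · simp only [List.length_append, List.length_singleton]
    rw [hs.container_eq, drop_permList π hk, List.filter_cons_of_neg (by simp [heq]),
      ← heq, List.filter_lt_succ_of_notMem (notMem_drop_succ_permList π hk)]

theorem Consistent.exists_canonical_push {C : Set (Σ n : ℕ, Equiv.Perm (Fin n))} {s : MState}
    (hs : Consistent π s) (hr : EntriesRead s) (hk : s.output.length < n)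
    (hgt : s.next < (π ⟨s.output.length, hk⟩ : ℕ))
    (hadm : ClassConstraint C (((permList π).drop s.output.length).filter (· < s.next + 1))) :
    ∃ pos s', MStep (ClassConstraint C) n s (.push pos) s' ∧ Canonical π s (.push pos) ∧
      Consistent π s' := by
  have hnext : s.next < n := hgt.trans (π _).isLt
  have hmem : s.next ∈ (permList π).drop s.output.length := by
    have := (mem_permList π).2 hnext
    rw [← List.take_append_drop s.output.length (permList π), ← hs.output_eq] at this
    exact (List.mem_append.1 this).resolve_left fun h => lt_irrefl _ (hr.output_lt _ h)
  obtain ⟨pos, hpos, hins⟩ := List.exists_insertIdx_filter_lt hmem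
    ((nodup_permList π).sublist (List.drop_sublist _ _))
  rw [← hs.container_eq] at hpos hins
  refine ⟨pos, _, .push s pos hnext hpos (hins ▸ hadm), ?_, hnext, hs.output_eq, hins⟩
  exact ⟨fun _ h => (hr.head?_ne hgt.le h).elim,
    fun _ _ => hs.not_isLRMaxValue_next hr hk hgt⟩

theorem Consistent.eq_finalState {s : MState} (hs : Consistent π s) (hr : EntriesRead s)
    (hk : s.output.length = n) : s = finalState π := by
  obtain ⟨next, container, output⟩ := s
  obtain ⟨hnext, hout, hcont⟩ := hs
  dsimp only at hk hnext hout hcont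
  rw [hk, List.take_of_length_le (length_permList π).le] at hout
  rw [hk, List.drop_of_length_le (length_permList π).le, List.filter_nil] at hcont
  subst hout hcont
  obtain rfl : next = n := hnext.antisymm <| not_lt.1 fun hlt =>
    lt_irrefl _ (hr.output_lt _ ((mem_permList π).2 hlt))
  rfl

theorem exists_canonical_mRun {C : Set (Σ n : ℕ, Equiv.Perm (Fin n))} (hC : IsPermClass C)
    {Q : MState → MOp → Prop} {ops₀ : List MOp}
    (h₀ : MRun (ClassConstraint C) n Q ⟨0, [], []⟩ ops₀ (finalState π)) {s : MState}
    (hs : Consistent π s) (hr : EntriesRead s) :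
    ∃ ops, MRun (ClassConstraint C) n (Canonical π) s ops (finalState π) := by
  rcases hs.output_length_le.lt_or_eq with hk | hk
  · obtain ⟨op, s', hst, hcan, hs'⟩ : ∃ op s', MStep (ClassConstraint C) n s op s' ∧
        Canonical π s op ∧ Consistent π s' := by
      rcases lt_trichotomy (π ⟨_, hk⟩ : ℕ) s.next with hlt | heq | hgt
      · exact ⟨_, hs.exists_canonical_pop hk hlt⟩
      · exact ⟨_, hs.exists_canonical_bypass hr hk heq⟩
      · obtain ⟨pos, h⟩ := hs.exists_canonical_push hr hk hgt <|
          classConstraint_filter_drop_of_mRun hC h₀ hk (fun _ hi => hs.val_lt_next hr hi) hgt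
        exact ⟨_, h⟩
    obtain ⟨ops, h⟩ := exists_canonical_mRun hC h₀ hs' (hst.entriesRead hr)
    exact ⟨op :: ops, .cons hst hcan h⟩
  · exact ⟨[], hs.eq_finalState hr hk ▸ .nil s⟩
termination_by 2 * n - (s.next + s.output.length)
decreasing_by
  have := hst.next_add_length_lt
  have := hs'.next_le
  have := hs'.output_length_le
  omega

end Machine

/-- For any class `C` and any `π` generated by the `C`-machine, there is a unique
generation sequence for `π` satisfying (U1) and (U2). -/
theorem stmt17 {n : ℕ} (C : Set (Σ n : ℕ, Equiv.Perm (Fin n))) (hC : IsPermClass C)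
    (π : Equiv.Perm (Fin n))
    (hgen : ∃ ops, Generates (ClassConstraint C) π (fun _ _ => True) ops) :
    ∃! ops, Generates (ClassConstraint C) π (Canonical π) ops := by
  obtain ⟨ops₀, h₀⟩ := hgen
  obtain ⟨ops, hops⟩ := exists_canonical_mRun hC h₀ (consistent_init π) entriesRead_init
  exact ⟨ops, hops, fun _ h => canonical_run_unique (consistent_init π) entriesRead_init h hops⟩
end
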